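/- arXiv:1309.0689 — 7 statements merged into one kernel-verified Lean document; each statement's English description precedes it below -/
import Mathlib

section
/- Let S_λ be a weighted shift on a countably infinite directed tree 𝒯 = (V, E) with weights λ = {λ_v}_{v ∈ V°}. Suppose there exist a system {μ_v}_{v ∈ V} of Borel probability measures on ℝ₊ and a system {ε_v}_{v ∈ V} of nonnegative real numbers satisfying the consistency condition. Then for every positive integer n, the power S_λ^n is densely defined if and only if ∫₀^∞ s^n dμ_u(s) < ∞ for every branching vertex u ∈ V_≺. -/
open MeasureTheory ENNReal NNReal

/-- `E` is the edge relation of a directed tree: every vertex has at most one parent,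
there are no (directed) circuits, and the underlying undirected graph is connected. -/
structure IsDirectedTree {V : Type*} (E : V → V → Prop) : Prop where
  nonempty : Nonempty V
  parent_unique : ∀ ⦃u u' v : V⦄, E u v → E u' v → u = u'
  no_circuit : ∀ (k : ℕ) (c : ℕ → V), 1 ≤ k → (∀ i < k, E (c i) (c (i + 1))) → c 0 ≠ c k
  connected : ∀ u v : V, Relation.ReflTransGen (fun a b : V => E a b ∨ E b a) u v

/-- `v ∈ V°`, i.e. `v` has a parent. -/
def HasParent {V : Type*} (E : V → V → Prop) (v : V) : Prop := ∃ u, E u v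

/-- `u` is a branching vertex: it has at least two children. -/
def IsBranching {V : Type*} (E : V → V → Prop) (u : V) : Prop :=
  ∃ v w : V, E u v ∧ E u w ∧ v ≠ w

open scoped Classical in
/-- The formal action `Λ_𝒯` of the weighted shift with weights `lam` (only the values of
`lam` on `V°` matter): `(Λ f)(v) = λ_v f(par v)` for `v ∈ V°` and `0` otherwise. -/
noncomputable def shiftFun {V : Type*} (E : V → V → Prop) (lam : V → ℂ) (f : V → ℂ) :
    V → ℂ :=
  fun v => if h : ∃ u, E u v then lam v * f (Classical.choose h) else 0

/-- The (natural) domain of the `n`-th power of the weighted shift `S_λ`, described as a set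
of functions: `f ∈ D(S_λ^n)` iff `Λ^k f ∈ ℓ²(V)` for all `k ≤ n`. This agrees with the
recursive definition `D(S^0) = ℓ²(V)`, `D(S^{n+1}) = {f ∈ D(S^n) : S^n f ∈ D(S)}`. -/
noncomputable def domPow {V : Type*} (E : V → V → Prop) (lam : V → ℂ) (n : ℕ) :
    Set (V → ℂ) :=
  {f | ∀ k ≤ n, Memℓp ((shiftFun E lam)^[k] f) 2}

/-- `S_λ^n` is densely defined, i.e. `D(S_λ^n)` is dense in `ℓ²(V)`. -/
noncomputable def DenselyDefinedPow {V : Type*} (E : V → V → Prop) (lam : V → ℂ)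
    (n : ℕ) : Prop :=
  Dense {f : lp (fun _ : V => ℂ) 2 | (⇑f : V → ℂ) ∈ domPow E lam n}

/-- `e_u`, the characteristic function of `{u}`. -/
noncomputable def eFun {V : Type*} (u : V) : V → ℂ := ({u} : Set V).indicator 1

/-- The consistency condition for a system `{μ_v}` of Borel measures on `ℝ₊` and a system
`{ε_v}` of nonnegative reals:
`μ_u(σ) = Σ_{v ∈ Chi(u)} |λ_v|² ∫_σ (1/t) dμ_v(t) + ε_u δ_0(σ)` for every `u` and every
Borel `σ ⊆ ℝ₊` (an identity in `[0,∞]`, with the conventions `1/0 = ∞`, `0·∞ = 0`). -/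
def Consistent {V : Type*} (E : V → V → Prop) (lam : V → ℂ) (μ : V → Measure ℝ≥0)
    (ε : V → ℝ) : Prop :=
  ∀ (u : V) (σ : Set ℝ≥0), MeasurableSet σ →
    μ u σ = (∑' v : {v : V // E u v}, (‖lam (v : V)‖₊ : ℝ≥0∞) ^ 2 *
        ∫⁻ t in σ, ((t : ℝ≥0∞))⁻¹ ∂(μ (v : V))) +
      ENNReal.ofReal (ε u) * Measure.dirac (0 : ℝ≥0) σ

open scoped Classical in
noncomputable def anc {V : Type*} (E : V → V → Prop) : ℕ → V → Option V
  | 0, w => some w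
  | (k+1), w => (anc E k w).bind fun a => if h : ∃ p, E p a then some h.choose else none

open scoped Classical in
noncomputable def pii {V : Type*} (E : V → V → Prop) (lam : V → ℂ) : ℕ → V → ℂ
  | 0, _ => 1
  | (k+1), w => (anc E k w).elim 0 fun a => if (∃ p, E p a) then pii E lam k w * lam a else 0

section Aux
open scoped Classical

variable {V : Type*} (E : V → V → Prop) (lam : V → ℂ)

theorem shiftFun_iterate_apply (k : ℕ) (f : V → ℂ) (w : V) :
    (shiftFun E lam)^[k] f w = pii E lam k w * (anc E k w).elim 0 f := by
  induction k generalizing f with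
  | zero => simp [anc, pii]
  | succ k ih =>
    rw [Function.iterate_succ_apply, ih]
    cases h : anc E k w with
    | none => simp [anc, pii, h]
    | some a =>
      simp only [anc, pii, h, Option.elim, Option.bind]
      by_cases hp : ∃ p, E p a
      · simp only [if_pos hp, dif_pos hp, shiftFun, Option.elim]
        ring
      · simp [if_neg hp, dif_neg hp, shiftFun, hp]

theorem eFun_apply (u w : V) : eFun u w = if w = u then 1 else 0 := by
  classical
  simp [eFun, Set.indicator_apply]

end Aux
section A
open scoped Classical
variable {V : Type*} (E : V → V → Prop) (lam : V → ℂ)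

/-- `A k u = ‖Λ^k e_u‖²` as an extended real. -/
noncomputable def Anorm (k : ℕ) (u : V) : ℝ≥0∞ :=
  ∑' w : V, (‖(shiftFun E lam)^[k] (eFun u) w‖₊ : ℝ≥0∞) ^ 2

theorem Anorm_zero (u : V) : Anorm E lam 0 u = 1 := by
  unfold Anorm
  rw [tsum_eq_single u]
  · simp [eFun_apply]
  · intro w hw; simp [eFun_apply, hw]

theorem Anorm_term (k : ℕ) (u w : V) :
    (‖(shiftFun E lam)^[k] (eFun u) w‖₊ : ℝ≥0∞) ^ 2 =
      (‖pii E lam k w‖₊ : ℝ≥0∞) ^ 2 * (if anc E k w = some u then 1 else 0) := by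
  rw [shiftFun_iterate_apply]
  cases h : anc E k w with
  | none => simp
  | some a =>
    by_cases ha : a = u
    · subst ha; simp [eFun_apply, Option.elim]
    · simp [eFun_apply, ha, Option.elim, Option.some.injEq]

theorem Anorm_succ (hpar : ∀ ⦃u u' v : V⦄, E u v → E u' v → u = u') (k : ℕ) (u : V) :
    Anorm E lam (k + 1) u =
      ∑' v : {v : V // E u v}, (‖lam (v : V)‖₊ : ℝ≥0∞) ^ 2 * Anorm E lam k (v : V) := by
  have key : ∀ w : V, (‖(shiftFun E lam)^[k+1] (eFun u) w‖₊ : ℝ≥0∞) ^ 2 =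
      ∑' v : {v : V // E u v},
        (‖lam (v : V)‖₊ : ℝ≥0∞) ^ 2 * (‖(shiftFun E lam)^[k] (eFun (v : V)) w‖₊ : ℝ≥0∞) ^ 2 := by
    intro w
    rw [Anorm_term]
    cases h : anc E k w with
    | none =>
      have h1 : anc E (k+1) w = none := by simp [anc, h]
      simp only [h1]
      rw [if_neg (by simp : ¬ ((none : Option V) = some u)), mul_zero]
      symm
      rw [ENNReal.tsum_eq_zero]
      intro v
      rw [Anorm_term, h]
      simp
    | some a =>
      by_cases hp : ∃ p, E p a
      · have h1 : anc E (k+1) w = some hp.choose := by simp [anc, h, dif_pos hp]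
        have h2 : pii E lam (k+1) w = pii E lam k w * lam a := by
          simp [pii, h, if_pos hp, Option.elim]
        by_cases hu : E u a
        · have hc : hp.choose = u := hpar hp.choose_spec hu
          rw [tsum_eq_single ⟨a, hu⟩]
          · rw [Anorm_term, h]
            simp only [h1, h2, hc, if_pos rfl, mul_one]
            push_cast [nnnorm_mul]
            ring
          · intro v hv
            rw [Anorm_term, h]
            have : ¬ (some a = some (v : V)) := by
              simp only [Option.some.injEq]
              intro hav
              exact hv (by apply Subtype.ext; exact hav.symm)
            simp [this]
        · have hcu : ¬ (hp.choose = u) := fun hc => hu (hc ▸ hp.choose_spec)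
          simp only [h1, Option.some.injEq, if_neg hcu, mul_zero]
          symm
          rw [ENNReal.tsum_eq_zero]
          intro v
          rw [Anorm_term, h]
          have : ¬ (some a = some (v : V)) := by
            simp only [Option.some.injEq]
            intro hav
            exact hu (hav ▸ v.2)
          simp [this]
      · have h1 : anc E (k+1) w = none := by simp [anc, h, dif_neg hp]
        simp only [h1]
        rw [if_neg (by simp : (none : Option V) ≠ some u), mul_zero]
        symm
        rw [ENNReal.tsum_eq_zero]
        intro v
        rw [Anorm_term, h]
        have : ¬ (some a = some (v : V)) := by
          simp only [Option.some.injEq]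
          intro hav
          exact hp ⟨u, hav ▸ v.2⟩
        simp [this]
  unfold Anorm
  calc ∑' w, (‖(shiftFun E lam)^[k+1] (eFun u) w‖₊ : ℝ≥0∞) ^ 2
      = ∑' w, ∑' v : {v : V // E u v},
          (‖lam (v : V)‖₊ : ℝ≥0∞) ^ 2 * (‖(shiftFun E lam)^[k] (eFun (v : V)) w‖₊ : ℝ≥0∞) ^ 2 :=
        tsum_congr key
    _ = ∑' v : {v : V // E u v}, ∑' w,
          (‖lam (v : V)‖₊ : ℝ≥0∞) ^ 2 * (‖(shiftFun E lam)^[k] (eFun (v : V)) w‖₊ : ℝ≥0∞) ^ 2 :=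
        ENNReal.tsum_comm
    _ = _ := by
        refine tsum_congr fun v => ?_
        rw [ENNReal.tsum_mul_left]

end A
section B
set_option linter.unusedSectionVars false
variable {V : Type*} [Countable V] (E : V → V → Prop) (lam : V → ℂ)
  (μ : V → Measure ℝ≥0) (ε : V → ℝ)

theorem mu_eq (hcons : Consistent E lam μ ε) (u : V) :
    μ u = Measure.sum (fun v : {v : V // E u v} =>
        ((‖lam (v : V)‖₊ : ℝ≥0∞) ^ 2) •
          ((μ (v : V)).withDensity fun t => ((t : ℝ≥0∞))⁻¹)) +
      (ENNReal.ofReal (ε u)) • Measure.dirac (0 : ℝ≥0) := by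
  ext σ hσ
  rw [hcons u σ hσ]
  rw [Measure.add_apply, Measure.sum_apply _ hσ, Measure.smul_apply, smul_eq_mul]
  congr 1
  refine tsum_congr fun v => ?_
  rw [Measure.smul_apply, smul_eq_mul, withDensity_apply _ hσ]

theorem lint_eq (hcons : Consistent E lam μ ε) (u : V) (g : ℝ≥0 → ℝ≥0∞)
    (hg : Measurable g) (hg0 : g 0 = 0) :
    ∫⁻ s, g s ∂(μ u) = ∑' v : {v : V // E u v},
      (‖lam (v : V)‖₊ : ℝ≥0∞) ^ 2 * ∫⁻ s, (↑s)⁻¹ * g s ∂(μ (v : V)) := by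
  conv_lhs => rw [mu_eq E lam μ ε hcons u]
  rw [lintegral_add_measure, lintegral_sum_measure, lintegral_smul_measure,
    lintegral_dirac, hg0, smul_zero, add_zero]
  refine tsum_congr fun v => ?_
  rw [lintegral_smul_measure,
    lintegral_withDensity_eq_lintegral_mul (f := fun t : ℝ≥0 => ((t : ℝ≥0∞))⁻¹) _
      measurable_coe_nnreal_ennreal.inv hg]
  rfl

theorem atom_zero (hμ : ∀ v : V, IsProbabilityMeasure (μ v))
    (hcons : Consistent E lam μ ε) {u v : V} (hv : E u v) (hl : lam v ≠ 0) :
    μ v {0} = 0 := by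
  by_contra h0
  have h := hcons u {0} (measurableSet_singleton 0)
  have hterm : (‖lam v‖₊ : ℝ≥0∞) ^ 2 * ∫⁻ t in ({0} : Set ℝ≥0), ((t : ℝ≥0∞))⁻¹ ∂(μ v) = ⊤ := by
    rw [lintegral_singleton]
    simp only [ENNReal.coe_zero, ENNReal.inv_zero]
    rw [ENNReal.top_mul h0, ENNReal.mul_top]
    simp [pow_eq_zero_iff, hl]
  have hle : (⊤ : ℝ≥0∞) ≤ μ u {0} := by
    rw [h]
    refine le_trans ?_ le_self_add
    rw [← hterm]
    exact ENNReal.le_tsum (⟨v, hv⟩ : {v : V // E u v})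
  haveI := hμ u
  exact (measure_lt_top (μ u) {0}).ne (top_le_iff.mp hle)

theorem Bmom_zero (hμ : ∀ v : V, IsProbabilityMeasure (μ v)) (u : V) :
    ∫⁻ s, (s : ℝ≥0∞) ^ 0 ∂(μ u) = 1 := by
  haveI := hμ u
  simp

theorem Bmom_succ (hμ : ∀ v : V, IsProbabilityMeasure (μ v))
    (hcons : Consistent E lam μ ε) (k : ℕ) (u : V) :
    ∫⁻ s, (s : ℝ≥0∞) ^ (k + 1) ∂(μ u) = ∑' v : {v : V // E u v},
      (‖lam (v : V)‖₊ : ℝ≥0∞) ^ 2 * ∫⁻ s, (s : ℝ≥0∞) ^ k ∂(μ (v : V)) := by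
  rw [lint_eq E lam μ ε hcons u _ (measurable_coe_nnreal_ennreal.pow_const (k+1))
    (by simp)]
  refine tsum_congr fun v => ?_
  by_cases hl : lam (v : V) = 0
  · simp [hl]
  · congr 1
    refine lintegral_congr_ae ?_
    have hz : μ (v : V) {0} = 0 := atom_zero E lam μ ε hμ hcons v.2 hl
    have hne : ∀ᵐ (s : ℝ≥0) ∂(μ (v : V)), s ≠ 0 := by
      rw [ae_iff]
      convert hz using 2
      ext s
      simp
    filter_upwards [hne] with s hs
    rw [pow_succ', ← mul_assoc,
      ENNReal.inv_mul_cancel (by exact_mod_cast hs) ENNReal.coe_ne_top, one_mul]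

theorem Anorm_eq_moment (hpar : ∀ ⦃u u' v : V⦄, E u v → E u' v → u = u')
    (hμ : ∀ v : V, IsProbabilityMeasure (μ v)) (hcons : Consistent E lam μ ε) (k : ℕ) :
    ∀ u : V, Anorm E lam k u = ∫⁻ s, (s : ℝ≥0∞) ^ k ∂(μ u) := by
  induction k with
  | zero => intro u; rw [Anorm_zero, Bmom_zero μ hμ]
  | succ k ih =>
    intro u
    rw [Anorm_succ E lam hpar, Bmom_succ E lam μ ε hμ hcons]
    exact tsum_congr fun v => by rw [ih]

theorem moment_mono (hμ : ∀ v : V, IsProbabilityMeasure (μ v)) {k n : ℕ} (hkn : k ≤ n)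
    (u : V) : ∫⁻ s, (s : ℝ≥0∞) ^ k ∂(μ u) ≤ 1 + ∫⁻ s, (s : ℝ≥0∞) ^ n ∂(μ u) := by
  haveI := hμ u
  calc ∫⁻ s, (s : ℝ≥0∞) ^ k ∂(μ u) ≤ ∫⁻ s, (1 + (s : ℝ≥0∞) ^ n) ∂(μ u) := by
        refine lintegral_mono fun s => ?_
        rcases le_total (s : ℝ≥0∞) 1 with hs | hs
        · exact le_trans (pow_le_one' hs k) le_self_add
        · exact le_trans (pow_le_pow_right₀ hs hkn) le_add_self
    _ = 1 + ∫⁻ s, (s : ℝ≥0∞) ^ n ∂(μ u) := by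
        rw [lintegral_add_left measurable_const, lintegral_one, measure_univ]


theorem moment_finite_all (hμ : ∀ v : V, IsProbabilityMeasure (μ v))
    (hcons : Consistent E lam μ ε) (n : ℕ)
    (hb : ∀ u : V, IsBranching E u → ∫⁻ s, (s : ℝ≥0∞) ^ n ∂(μ u) < ⊤) :
    ∀ k, k ≤ n → ∀ u : V, ∫⁻ s, (s : ℝ≥0∞) ^ k ∂(μ u) < ⊤ := by
  intro k
  induction k with
  | zero => intro _ u; rw [Bmom_zero μ hμ]; exact one_lt_top
  | succ k ih =>
    intro hkn u
    by_cases hbr : IsBranching E u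
    · exact lt_of_le_of_lt (moment_mono μ hμ hkn u)
        (ENNReal.add_lt_top.mpr ⟨one_lt_top, hb u hbr⟩)
    · rw [Bmom_succ E lam μ ε hμ hcons]
      rcases isEmpty_or_nonempty {v : V // E u v} with he | hne0
      · rw [tsum_empty]; exact zero_lt_top
      · obtain ⟨v0⟩ := hne0
        have hsingle : ∀ b : {v : V // E u v}, b ≠ v0 →
            (‖lam (b : V)‖₊ : ℝ≥0∞) ^ 2 * ∫⁻ s, (s : ℝ≥0∞) ^ k ∂(μ (b : V)) = 0 := by
          intro b hb'
          exfalso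
          exact hb' (by
            rcases b with ⟨a, ha⟩; rcases v0 with ⟨c, hc⟩
            by_contra hne
            exact hbr ⟨a, c, ha, hc, fun hac => hne (by simp [hac])⟩)
        rw [tsum_eq_single v0 hsingle]
        exact ENNReal.mul_lt_top (by simp [lt_top_iff_ne_top])
          (ih (Nat.le_of_succ_le hkn) (v0 : V))
end B
section L2
variable {V : Type*} (E : V → V → Prop) (lam : V → ℂ)

theorem memℓp_two_iff (g : V → ℂ) :
    Memℓp g 2 ↔ (∑' w : V, (‖g w‖₊ : ℝ≥0∞) ^ 2) ≠ ⊤ := by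
  have hp : 0 < (2 : ℝ≥0∞).toReal := by norm_num
  rw [memℓp_gen_iff hp]
  have heq : (fun w => ‖g w‖ ^ (2 : ℝ≥0∞).toReal) =
      fun w => (((‖g w‖₊ ^ 2 : ℝ≥0)) : ℝ) := by
    funext w
    rw [ENNReal.toReal_ofNat, show ((2 : ℝ)) = ((2 : ℕ) : ℝ) by norm_num,
      Real.rpow_natCast]
    push_cast
    rfl
  rw [heq, NNReal.summable_coe, ← ENNReal.tsum_coe_ne_top_iff_summable]
  simp [ENNReal.coe_pow]

theorem shiftFun_iterate_norm_le {f g : V → ℂ} (h : ∀ w, ‖f w‖ ≤ ‖g w‖) (k : ℕ) :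
    ∀ w, ‖(shiftFun E lam)^[k] f w‖ ≤ ‖(shiftFun E lam)^[k] g w‖ := by
  induction k with
  | zero => exact h
  | succ k ih =>
    intro w
    rw [Function.iterate_succ_apply', Function.iterate_succ_apply']
    by_cases hp : ∃ p, E p w
    · simp only [shiftFun, dif_pos hp, norm_mul]
      exact mul_le_mul_of_nonneg_left (ih _) (norm_nonneg _)
    · simp [shiftFun, dif_neg hp]

theorem memℓp_of_dominated {f g : V → ℂ} (h : ∀ w, ‖f w‖ ≤ ‖g w‖)
    (hg : Memℓp g 2) : Memℓp f 2 := by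
  rw [memℓp_two_iff] at hg ⊢
  refine ne_top_of_le_ne_top hg (ENNReal.tsum_le_tsum fun w => ?_)
  have : ‖f w‖₊ ≤ ‖g w‖₊ := h w
  exact pow_le_pow_left₀ zero_le (by exact_mod_cast this) 2

theorem shiftFun_smul (c : ℂ) (f : V → ℂ) :
    shiftFun E lam (c • f) = c • shiftFun E lam f := by
  funext w
  by_cases hp : ∃ p, E p w
  · simp only [shiftFun, dif_pos hp, Pi.smul_apply, smul_eq_mul]; ring
  · simp [shiftFun, dif_neg hp]

theorem shiftFun_iterate_smul (c : ℂ) (f : V → ℂ) (k : ℕ) :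
    (shiftFun E lam)^[k] (c • f) = c • (shiftFun E lam)^[k] f := by
  induction k with
  | zero => rfl
  | succ k ih => rw [Function.iterate_succ_apply', Function.iterate_succ_apply', ih,
      shiftFun_smul]

theorem shiftFun_add (f g : V → ℂ) :
    shiftFun E lam (f + g) = shiftFun E lam f + shiftFun E lam g := by
  funext w
  by_cases hp : ∃ p, E p w
  · simp only [shiftFun, dif_pos hp, Pi.add_apply]; ring
  · simp [shiftFun, dif_neg hp]

theorem shiftFun_iterate_add (f g : V → ℂ) (k : ℕ) :
    (shiftFun E lam)^[k] (f + g) = (shiftFun E lam)^[k] f + (shiftFun E lam)^[k] g := by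
  induction k with
  | zero => rfl
  | succ k ih => rw [Function.iterate_succ_apply', Function.iterate_succ_apply',
      Function.iterate_succ_apply', ih, shiftFun_add]

theorem shiftFun_zero_fun : shiftFun E lam (0 : V → ℂ) = 0 := by
  funext w
  by_cases hp : ∃ p, E p w
  · simp [shiftFun, dif_pos hp]
  · simp [shiftFun, dif_neg hp]

theorem shiftFun_iterate_zero (k : ℕ) : (shiftFun E lam)^[k] (0 : V → ℂ) = 0 := by
  induction k with
  | zero => rfl
  | succ k ih => rw [Function.iterate_succ_apply', ih, shiftFun_zero_fun]

theorem domPow_zero_mem (n : ℕ) : (0 : V → ℂ) ∈ domPow E lam n := by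
  intro k _
  rw [shiftFun_iterate_zero]
  exact zero_memℓp

theorem domPow_add_mem {n : ℕ} {f g : V → ℂ} (hf : f ∈ domPow E lam n)
    (hg : g ∈ domPow E lam n) : f + g ∈ domPow E lam n := by
  intro k hk
  rw [shiftFun_iterate_add]
  exact (hf k hk).add (hg k hk)

theorem domPow_smul_mem {n : ℕ} (c : ℂ) {f : V → ℂ} (hf : f ∈ domPow E lam n) :
    c • f ∈ domPow E lam n := by
  intro k hk
  rw [shiftFun_iterate_smul]
  exact (hf k hk).const_smul c

end L2

/-- Theorem (wsi)(ii): if `S_λ` is a weighted shift on a countably infinite directed tree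
admitting a consistent system of Borel probability measures on `ℝ₊`, then for every `n ≥ 1`,
`S_λ^n` is densely defined iff `∫₀^∞ s^n dμ_u(s) < ∞` for every branching vertex `u`. -/
theorem stmt_0 {V : Type*} [Countable V] [Infinite V]
    (E : V → V → Prop) (hT : IsDirectedTree E) (lam : V → ℂ)
    (μ : V → Measure ℝ≥0) (hμ : ∀ v : V, IsProbabilityMeasure (μ v))
    (ε : V → ℝ) (hε : ∀ v : V, 0 ≤ ε v)
    (hcons : Consistent E lam μ ε) (n : ℕ) (hn : 1 ≤ n) :
    DenselyDefinedPow E lam n ↔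
      ∀ u : V, IsBranching E u → ∫⁻ s, (s : ℝ≥0∞) ^ n ∂(μ u) < ⊤ := by
  classical
  haveI : Fact ((1 : ℝ≥0∞) ≤ 2) := ⟨one_le_two⟩
  have hAB : ∀ (k : ℕ) (u : V), Anorm E lam k u = ∫⁻ s, (s : ℝ≥0∞) ^ k ∂(μ u) :=
    fun k => Anorm_eq_moment E lam μ ε hT.parent_unique hμ hcons k
  have heu_iff : ∀ (k : ℕ) (u : V),
      Memℓp ((shiftFun E lam)^[k] (eFun u)) 2 ↔ Anorm E lam k u ≠ ⊤ := by
    intro k u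
    rw [memℓp_two_iff]
    rfl
  constructor
  · -- densely defined → moments finite at branching vertices
    intro hd u _hbr
    have h1 : (lp.single 2 u (1 : ℂ) : lp (fun _ : V => ℂ) 2) ∈
        closure {f : lp (fun _ : V => ℂ) 2 | (⇑f : V → ℂ) ∈ domPow E lam n} :=
      hd _
    rw [Metric.mem_closure_iff] at h1
    obtain ⟨f, hf, hdist⟩ := h1 1 one_pos
    have hfu : (f : V → ℂ) u ≠ 0 := by
      intro h0
      have hle : ‖((lp.single 2 u (1 : ℂ) - f : lp (fun _ : V => ℂ) 2) : V → ℂ) u‖ ≤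
          ‖(lp.single 2 u (1 : ℂ) - f : lp (fun _ : V => ℂ) 2)‖ :=
        lp.norm_apply_le_norm two_ne_zero _ u
      rw [lp.coeFn_sub, Pi.sub_apply, lp.single_apply_self, h0, sub_zero] at hle
      rw [dist_eq_norm] at hdist
      simp only [norm_one] at hle
      linarith
    set c : ℂ := (f : V → ℂ) u with hc
    have hdom : ∀ w, ‖eFun u w‖ ≤ ‖(c⁻¹ • (f : V → ℂ)) w‖ := by
      intro w
      by_cases hw : w = u
      · subst hw
        have h1 : ‖eFun w w‖ = 1 := by rw [eFun_apply, if_pos rfl, norm_one]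
        have h2 : ‖(c⁻¹ • (f : V → ℂ)) w‖ = 1 := by
          simp only [Pi.smul_apply, smul_eq_mul, ← hc]
          rw [inv_mul_cancel₀ hfu, norm_one]
        rw [h1, h2]
      · have h0 : eFun u w = 0 := by rw [eFun_apply, if_neg hw]
        rw [h0, norm_zero]
        exact norm_nonneg _
    have hmem : Memℓp ((shiftFun E lam)^[n] (eFun u)) 2 := by
      refine memℓp_of_dominated (shiftFun_iterate_norm_le E lam hdom n) ?_
      rw [shiftFun_iterate_smul]
      exact (hf n le_rfl).const_smul c⁻¹
    have := (heu_iff n u).1 hmem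
    rw [hAB] at this
    exact lt_top_iff_ne_top.2 this
  · -- moments finite at branching vertices → densely defined
    intro hb
    have hfin : ∀ k ≤ n, ∀ u : V, Anorm E lam k u ≠ ⊤ := by
      intro k hk u
      rw [hAB]
      exact (moment_finite_all E lam μ ε hμ hcons n hb k hk u).ne
    have heu : ∀ u : V, eFun u ∈ domPow E lam n := by
      intro u k hk
      exact (heu_iff k u).2 (hfin k hk u)
    have hsingle_mem : ∀ (u : V) (a : ℂ), (⇑(lp.single 2 u a : lp (fun _ : V => ℂ) 2) :
        V → ℂ) ∈ domPow E lam n := by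
      intro u a
      have : (⇑(lp.single 2 u a : lp (fun _ : V => ℂ) 2) : V → ℂ) = a • eFun u := by
        funext w
        rw [lp.single_apply, Pi.smul_apply, eFun_apply, smul_eq_mul]
        by_cases hw : w = u
        · subst hw; simp
        · simp [hw]
      rw [this]
      exact domPow_smul_mem E lam a (heu u)
    have hF : ∀ (f : lp (fun _ : V => ℂ) 2) (F : Finset V),
        (⇑(∑ u ∈ F, lp.single 2 u ((f : V → ℂ) u)) : V → ℂ) ∈ domPow E lam n := by
      intro f F
      induction F using Finset.induction with
      | empty => rw [Finset.sum_empty]; exact domPow_zero_mem E lam n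
      | insert x s hx ih =>
        rw [Finset.sum_insert hx, lp.coeFn_add]
        exact domPow_add_mem E lam (hsingle_mem x _) ih
    rw [DenselyDefinedPow, Metric.dense_iff]
    intro f r hr
    have hsum := lp.hasSum_single (by norm_num : (2 : ℝ≥0∞) ≠ ⊤) f
    have := (Metric.tendsto_nhds.mp hsum r hr).exists
    obtain ⟨F, hFclose⟩ := this
    exact ⟨∑ u ∈ F, lp.single 2 u ((f : V → ℂ) u),
      Metric.mem_ball.2 (by simpa [dist_comm] using hFclose), hF f F⟩
end

section
/- Let η ∈ {2, 3, …} ∪ {∞} and κ ∈ {0, 1, 2, …} ∪ {∞}, and let S_λ be a weighted shift on the directed tree 𝒯_{η,κ} with nonzero weights λ = {λ_v}_{v ∈ V_{η,κ}°}. Suppose there exists a sequence {μ_i}_{i ∈ J_η} of Borel probability measures on ℝ₊ satisfying the moment condition ∫₀^∞ s^n dμ_i(s) = |λ_{i,2} λ_{i,3} ⋯ λ_{i,n+1}|² for all positive integers n and all i ∈ J_η, together with one of the conditions (i), (ii), (iii) (as in the hypotheses of the density theorem for 𝒯_{η,κ}). Then for every positive integer n, the following two assertions are equivalent: (1) S_λ^n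 is densely defined and S_λ^{n+1} is not densely defined; (2) Σ_{i ∈ J_η} |λ_{i,1}|² ∫₀^∞ s^{n−1} dμ_i(s) < ∞ and Σ_{i ∈ J_η} |λ_{i,1}|² ∫₀^∞ s^n dμ_i(s) = ∞. -/
open MeasureTheory ENNReal NNReal

/-- The trunk vertices of `𝒯_{η,κ}`: `⟨m, _⟩` with `m ∈ {0,…,κ}` represents the vertex
`-m` (so `⟨0, _⟩` is the branching vertex `0`). -/
abbrev TrunkV (κ : ℕ∞) : Type := {m : ℕ // (m : ℕ∞) ≤ κ}

/-- The branch vertices `(i,j)` of `𝒯_{η,κ}`, with `i ∈ J_η` and `j ∈ ℕ` positive. -/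
abbrev BranchV (η : ℕ∞) : Type := {p : ℕ × ℕ // 1 ≤ p.1 ∧ (p.1 : ℕ∞) ≤ η ∧ 1 ≤ p.2}

/-- The vertex set `V_{η,κ}` of the directed tree `𝒯_{η,κ}`. -/
abbrev TreeV (η κ : ℕ∞) : Type := TrunkV κ ⊕ BranchV η

/-- The edge relation of `𝒯_{η,κ}`: edges `(-k) → (-k+1)` for `k ∈ J_κ`,
`0 → (i,1)` for `i ∈ J_η`, and `(i,j) → (i,j+1)`. -/
def TreeE (η κ : ℕ∞) : TreeV η κ → TreeV η κ → Prop
  | Sum.inl a, Sum.inl b => a.1 = b.1 + 1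
  | Sum.inl a, Sum.inr p => a.1 = 0 ∧ p.1.2 = 1
  | Sum.inr p, Sum.inr q => p.1.1 = q.1.1 ∧ q.1.2 = p.1.2 + 1
  | Sum.inr _, Sum.inl _ => False

/-- `λ_{i,j}`, the weight attached to the branch vertex `(i,j)` (junk value `0` for
invalid indices). -/
def lamB {η κ : ℕ∞} (lam : TreeV η κ → ℂ) (i j : ℕ) : ℂ :=
  if h : 1 ≤ i ∧ (i : ℕ∞) ≤ η ∧ 1 ≤ j then lam (Sum.inr ⟨(i, j), h⟩) else 0

/-- `λ_{-l}`, the weight attached to the trunk vertex `-l` (junk value `0` for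
invalid indices); in particular `lamT lam 0 = λ_0`. -/
def lamT {η κ : ℕ∞} (lam : TreeV η κ → ℂ) (l : ℕ) : ℂ :=
  if h : (l : ℕ∞) ≤ κ then lam (Sum.inl ⟨l, h⟩) else 0

/-- The sum `Σ_{i ∈ J_η} |λ_{i,1}|² ∫₀^∞ g(s) dμ_i(s)`, with values in `[0,∞]`. -/
noncomputable def branchSum (η κ : ℕ∞) (lam : TreeV η κ → ℂ) (μ : ℕ → Measure ℝ≥0)
    (g : ℝ≥0 → ℝ≥0∞) : ℝ≥0∞ :=
  ∑' i : {i : ℕ // 1 ≤ i ∧ (i : ℕ∞) ≤ η},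
    (‖lamB lam (i : ℕ) 1‖₊ : ℝ≥0∞) ^ 2 * ∫⁻ s, g s ∂(μ (i : ℕ))

/-- The moment condition `∫₀^∞ s^n dμ_i(s) = |λ_{i,2} ⋯ λ_{i,n+1}|²` for all `n ≥ 1`
and all `i ∈ J_η`. -/
def MomentCond (η κ : ℕ∞) (lam : TreeV η κ → ℂ) (μ : ℕ → Measure ℝ≥0) : Prop :=
  ∀ n : ℕ, 1 ≤ n → ∀ i : ℕ, 1 ≤ i → (i : ℕ∞) ≤ η →
    ∫⁻ s, (s : ℝ≥0∞) ^ n ∂(μ i) =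
      (‖∏ j ∈ Finset.Icc 2 (n + 1), lamB lam i j‖₊ : ℝ≥0∞) ^ 2

/-- Condition (i): `κ = 0` and `Σ_{i ∈ J_η} |λ_{i,1}|² ∫₀^∞ (1/s) dμ_i(s) ≤ 1`. -/
def CondI (η κ : ℕ∞) (lam : TreeV η κ → ℂ) (μ : ℕ → Measure ℝ≥0) : Prop :=
  κ = 0 ∧ branchSum η κ lam μ (fun s => ((s : ℝ≥0∞))⁻¹) ≤ 1

/-- Condition (ii): `0 < κ < ∞`, `Σ_{i ∈ J_η} |λ_{i,1}|² ∫₀^∞ (1/s) dμ_i(s) = 1`,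
`|λ_0 ⋯ λ_{-(l-1)}|² Σ_{i ∈ J_η} |λ_{i,1}|² ∫₀^∞ s^{-(l+1)} dμ_i(s) = 1` for `l ∈ J_{κ-1}`,
and `|λ_0 ⋯ λ_{-(κ-1)}|² Σ_{i ∈ J_η} |λ_{i,1}|² ∫₀^∞ s^{-(κ+1)} dμ_i(s) ≤ 1`. -/
def CondII (η κ : ℕ∞) (lam : TreeV η κ → ℂ) (μ : ℕ → Measure ℝ≥0) : Prop :=
  ∃ k : ℕ, 0 < k ∧ κ = (k : ℕ∞) ∧
    branchSum η κ lam μ (fun s => ((s : ℝ≥0∞))⁻¹) = 1 ∧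
    (∀ l : ℕ, 1 ≤ l → l ≤ k - 1 →
      (‖∏ j ∈ Finset.range l, lamT lam j‖₊ : ℝ≥0∞) ^ 2 *
        branchSum η κ lam μ (fun s => ((s : ℝ≥0∞) ^ (l + 1))⁻¹) = 1) ∧
    (‖∏ j ∈ Finset.range k, lamT lam j‖₊ : ℝ≥0∞) ^ 2 *
      branchSum η κ lam μ (fun s => ((s : ℝ≥0∞) ^ (k + 1))⁻¹) ≤ 1

/-- Condition (iii): `κ = ∞` and the equalities of (ii) hold for all `l ≥ 1`. -/
def CondIII (η κ : ℕ∞) (lam : TreeV η κ → ℂ) (μ : ℕ → Measure ℝ≥0) : Prop :=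
  κ = ⊤ ∧ branchSum η κ lam μ (fun s => ((s : ℝ≥0∞))⁻¹) = 1 ∧
    ∀ l : ℕ, 1 ≤ l →
      (‖∏ j ∈ Finset.range l, lamT lam j‖₊ : ℝ≥0∞) ^ 2 *
        branchSum η κ lam μ (fun s => ((s : ℝ≥0∞) ^ (l + 1))⁻¹) = 1


/-! ### Auxiliary development -/

namespace Wndd

variable {η κ : ℕ∞}

/-- The index set `J_η`. -/
abbrev Idx (η : ℕ∞) := {i : ℕ // 1 ≤ i ∧ (i : ℕ∞) ≤ η}

/-- The branching vertex `0`. -/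
def root0 (η κ : ℕ∞) : TreeV η κ := Sum.inl ⟨0, by simp⟩

lemma parent_unique {u u' v : TreeV η κ} (h : TreeE η κ u v) (h' : TreeE η κ u' v) :
    u = u' := by
  cases v with
  | inl b =>
    cases u with
    | inl a =>
      cases u' with
      | inl a' =>
        have h1 : a.1 = b.1 + 1 := h
        have h2 : a'.1 = b.1 + 1 := h'
        exact congrArg Sum.inl (Subtype.ext (h1.trans h2.symm))
      | inr q => exact (h' : False).elim
    | inr p => exact (h : False).elim
  | inr p =>
    cases u with
    | inl a =>
      cases u' with
      | inl a' =>
        have h1 : a.1 = 0 ∧ p.1.2 = 1 := h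
        have h2 : a'.1 = 0 ∧ p.1.2 = 1 := h'
        exact congrArg Sum.inl (Subtype.ext (h1.1.trans h2.1.symm))
      | inr q =>
        have h1 : a.1 = 0 ∧ p.1.2 = 1 := h
        have h2 : q.1.1 = p.1.1 ∧ p.1.2 = q.1.2 + 1 := h'
        have hq := q.2.2.2
        omega
    | inr q =>
      cases u' with
      | inl a' =>
        have h1 : q.1.1 = p.1.1 ∧ p.1.2 = q.1.2 + 1 := h
        have h2 : a'.1 = 0 ∧ p.1.2 = 1 := h'
        have hq := q.2.2.2
        omega
      | inr q' =>
        have h1 : q.1.1 = p.1.1 ∧ p.1.2 = q.1.2 + 1 := h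
        have h2 : q'.1.1 = p.1.1 ∧ p.1.2 = q'.1.2 + 1 := h'
        refine congrArg Sum.inr (Subtype.ext (Prod.ext ?_ ?_))
        · exact h1.1.trans h2.1.symm
        · omega

lemma edge_tv (m : ℕ) (h : ((m + 1 : ℕ) : ℕ∞) ≤ κ) (h' : ((m : ℕ) : ℕ∞) ≤ κ) :
    TreeE η κ (Sum.inl ⟨m + 1, h⟩) (Sum.inl ⟨m, h'⟩) := rfl

lemma edge_bv1 (i : ℕ) (h : 1 ≤ (i, 1).1 ∧ ((i, 1).1 : ℕ∞) ≤ η ∧ 1 ≤ (i, 1).2) :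
    TreeE η κ (root0 η κ) (Sum.inr ⟨(i, 1), h⟩) := ⟨rfl, rfl⟩

lemma edge_bv (i j : ℕ) (h : 1 ≤ (i, j).1 ∧ ((i, j).1 : ℕ∞) ≤ η ∧ 1 ≤ (i, j).2)
    (h' : 1 ≤ (i, j + 1).1 ∧ ((i, j + 1).1 : ℕ∞) ≤ η ∧ 1 ≤ (i, j + 1).2) :
    TreeE η κ (Sum.inr ⟨(i, j), h⟩) (Sum.inr ⟨(i, j + 1), h'⟩) := ⟨rfl, rfl⟩

lemma shift_apply (lam f : TreeV η κ → ℂ) {u v : TreeV η κ} (hu : TreeE η κ u v) :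
    shiftFun (TreeE η κ) lam f v = lam v * f u := by
  have h : ∃ w, TreeE η κ w v := ⟨u, hu⟩
  simp only [shiftFun, dif_pos h]
  rw [parent_unique (Classical.choose_spec h) hu]

lemma shift_apply_noparent (lam f : TreeV η κ → ℂ) {v : TreeV η κ}
    (h : ¬∃ u, TreeE η κ u v) : shiftFun (TreeE η κ) lam f v = 0 := by
  simp only [shiftFun, dif_neg h]

lemma uchild_tv (m : ℕ) (h : ((m + 1 : ℕ) : ℕ∞) ≤ κ) (h' : ((m : ℕ) : ℕ∞) ≤ κ)
    {u : TreeV η κ} (hu : TreeE η κ (Sum.inl ⟨m + 1, h⟩) u) :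
    u = Sum.inl ⟨m, h'⟩ := by
  cases u with
  | inl b =>
    have h1 : m + 1 = b.1 + 1 := hu
    exact congrArg Sum.inl (Subtype.ext (show b.1 = m by omega))
  | inr p =>
    have h1 : m + 1 = 0 ∧ p.1.2 = 1 := hu
    omega

lemma uchild_bv (i j : ℕ) (h : 1 ≤ (i, j).1 ∧ ((i, j).1 : ℕ∞) ≤ η ∧ 1 ≤ (i, j).2)
    (h' : 1 ≤ (i, j + 1).1 ∧ ((i, j + 1).1 : ℕ∞) ≤ η ∧ 1 ≤ (i, j + 1).2)
    {u : TreeV η κ} (hu : TreeE η κ (Sum.inr ⟨(i, j), h⟩) u) :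
    u = Sum.inr ⟨(i, j + 1), h'⟩ := by
  cases u with
  | inl b => exact (hu : False).elim
  | inr q =>
    have h1 : i = q.1.1 ∧ q.1.2 = j + 1 := hu
    exact congrArg Sum.inr (Subtype.ext (Prod.ext h1.1.symm h1.2))

open scoped Classical in
/-- The function `a · e_v`. -/
noncomputable def delta {V : Type*} (v : V) (a : ℂ) : V → ℂ := fun u => if u = v then a else 0

lemma delta_self {V : Type*} (v : V) (a : ℂ) : delta v a v = a := by simp [delta]

lemma delta_ne {V : Type*} {v u : V} (a : ℂ) (h : u ≠ v) : delta v a u = 0 := by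
  simp [delta, h]

lemma coe_single {V : Type*} [DecidableEq V] (v : V) (a : ℂ) :
    ⇑(lp.single (E := fun _ : V => ℂ) 2 v a) = delta v a := by
  funext u
  by_cases h : u = v
  · subst h
    rw [lp.single_apply_self (E := fun _ : V => ℂ), delta_self]
  · rw [lp.single_apply_ne (E := fun _ : V => ℂ) 2 v a h, delta_ne a h]

lemma memℓp_delta {V : Type*} (v : V) (a : ℂ) : Memℓp (delta v a) 2 := by
  classical
  rw [← coe_single v a]
  exact lp.memℓp _


lemma shift_delta (lam : TreeV η κ → ℂ) {v c : TreeV η κ} (hc : TreeE η κ v c)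
    (huc : ∀ u, TreeE η κ v u → u = c) (a : ℂ) :
    shiftFun (TreeE η κ) lam (delta v a) = delta c (lam c * a) := by
  funext u
  by_cases hp : ∃ w, TreeE η κ w u
  · obtain ⟨w, hw⟩ := hp
    rw [shift_apply lam _ hw]
    by_cases hwv : w = v
    · subst hwv
      have hu : u = c := huc u hw
      subst hu
      rw [delta_self, delta_self]
    · have huc' : u ≠ c := fun h => hwv (parent_unique hw (h ▸ hc : TreeE η κ v u))
      rw [delta_ne a hwv, delta_ne _ huc', mul_zero]
  · rw [shift_apply_noparent lam _ hp]
    have huc' : u ≠ c := fun h => hp ⟨v, h ▸ hc⟩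
    rw [delta_ne _ huc']

/-- Function supported on the `j`-th level of the branches, with value `c i` at `(i,j)`. -/
def bfun (η κ : ℕ∞) (c : ℕ → ℂ) (j : ℕ) : TreeV η κ → ℂ
  | Sum.inl _ => 0
  | Sum.inr p => if p.1.2 = j then c p.1.1 else 0

lemma bfun_inl (c : ℕ → ℂ) (j : ℕ) (b : TrunkV κ) :
    bfun η κ c j (Sum.inl b) = 0 := rfl

lemma bfun_inr (c : ℕ → ℂ) (j : ℕ) (p : BranchV η) :
    bfun η κ c j (Sum.inr p) = if p.1.2 = j then c p.1.1 else 0 := rfl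

lemma bfun_root (c : ℕ → ℂ) (j : ℕ) : bfun η κ c j (root0 η κ) = 0 := rfl

lemma shift_inl (lam f : TreeV η κ → ℂ) (b : TrunkV κ)
    (hf : ∀ b' : TrunkV κ, f (Sum.inl b') = 0) :
    shiftFun (TreeE η κ) lam f (Sum.inl b) = 0 := by
  by_cases hp : ∃ w, TreeE η κ w (Sum.inl b : TreeV η κ)
  · obtain ⟨w, hw⟩ := hp
    cases w with
    | inl a => rw [shift_apply lam _ hw, hf, mul_zero]
    | inr q => exact (hw : False).elim
  · exact shift_apply_noparent lam _ hp

lemma shift_bfun (lam : TreeV η κ → ℂ) (c : ℕ → ℂ) (j : ℕ) (hj : 1 ≤ j) :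
    shiftFun (TreeE η κ) lam (bfun η κ c j) =
      bfun η κ (fun i => lamB lam i (j + 1) * c i) (j + 1) := by
  funext u
  cases u with
  | inl b => rw [shift_inl lam _ b (fun b' => rfl), bfun_inl]
  | inr p =>
    obtain ⟨⟨i, j'⟩, hpp⟩ := p
    obtain ⟨hi1, hiη, hj'⟩ := hpp
    rcases Nat.lt_or_ge j' 2 with hlt | hge
    · have hj1 : j' = 1 := by omega
      subst hj1
      rw [shift_apply lam _ (edge_bv1 i ⟨hi1, hiη, le_refl 1⟩), bfun_root, mul_zero, bfun_inr]
      have : ¬((i, 1).2 = j + 1) := by simp; omega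
      rw [if_neg this]
    · obtain ⟨j'', rfl⟩ : ∃ t, j' = t + 1 := ⟨j' - 1, by omega⟩
      have hj'' : 1 ≤ j'' := by omega
      have hq : 1 ≤ (i, j'').1 ∧ ((i, j'').1 : ℕ∞) ≤ η ∧ 1 ≤ (i, j'').2 := ⟨hi1, hiη, hj''⟩
      rw [shift_apply lam _ (edge_bv i j'' hq ⟨hi1, hiη, by omega⟩), bfun_inr, bfun_inr]
      by_cases hcase : j'' = j
      · subst hcase
        rw [if_pos rfl, if_pos rfl]
        congr 1
        rw [lamB, dif_pos (show 1 ≤ i ∧ (i : ℕ∞) ≤ η ∧ 1 ≤ j'' + 1 from ⟨hi1, hiη, by omega⟩)]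
      · rw [if_neg (by simpa using hcase), if_neg (by simp; omega), mul_zero]

lemma shift_delta_root (lam : TreeV η κ → ℂ) (a : ℂ) :
    shiftFun (TreeE η κ) lam (delta (root0 η κ) a) =
      bfun η κ (fun i => lamB lam i 1 * a) 1 := by
  funext u
  cases u with
  | inl b =>
    rw [bfun_inl]
    by_cases hp : ∃ w, TreeE η κ w (Sum.inl b : TreeV η κ)
    · obtain ⟨w, hw⟩ := hp
      cases w with
      | inl a' =>
        rw [shift_apply lam _ hw]
        have h1 : a'.1 = b.1 + 1 := hw
        have hne : (Sum.inl a' : TreeV η κ) ≠ root0 η κ := by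
          rw [root0]
          intro hcon
          injection hcon with hcon'
          have : a'.1 = 0 := by rw [hcon']
          omega
        rw [delta_ne _ hne, mul_zero]
      | inr q => exact (hw : False).elim
    · exact shift_apply_noparent lam _ hp
  | inr p =>
    obtain ⟨⟨i, j'⟩, hpp⟩ := p
    obtain ⟨hi1, hiη, hj'⟩ := hpp
    rcases Nat.lt_or_ge j' 2 with hlt | hge
    · have hj1 : j' = 1 := by omega
      subst hj1
      rw [shift_apply lam _ (edge_bv1 i ⟨hi1, hiη, le_refl 1⟩), delta_self, bfun_inr,
        if_pos rfl]
      congr 1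
      rw [lamB, dif_pos (show 1 ≤ i ∧ (i : ℕ∞) ≤ η ∧ 1 ≤ 1 from ⟨hi1, hiη, le_refl 1⟩)]
    · obtain ⟨j'', rfl⟩ : ∃ t, j' = t + 1 := ⟨j' - 1, by omega⟩
      have hj'' : 1 ≤ j'' := by omega
      have hq : 1 ≤ (i, j'').1 ∧ ((i, j'').1 : ℕ∞) ≤ η ∧ 1 ≤ (i, j'').2 := ⟨hi1, hiη, hj''⟩
      rw [shift_apply lam _ (edge_bv i j'' hq ⟨hi1, hiη, by omega⟩), bfun_inr]
      have hne : (Sum.inr ⟨(i, j''), hq⟩ : TreeV η κ) ≠ root0 η κ := by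
        rw [root0]; exact fun hcon => by cases hcon
      rw [delta_ne _ hne, mul_zero, if_neg (by simp; omega)]

/-- Product of the weights `λ_{i,1} ⋯ λ_{i,k}`. -/
def Wprod (lam : TreeV η κ → ℂ) (i k : ℕ) : ℂ := ∏ t ∈ Finset.Icc 1 k, lamB lam i t

lemma iterate_delta_root (lam : TreeV η κ → ℂ) (a : ℂ) (k : ℕ) (hk : 1 ≤ k) :
    (shiftFun (TreeE η κ) lam)^[k] (delta (root0 η κ) a) =
      bfun η κ (fun i => Wprod lam i k * a) k := by
  induction k with
  | zero => omega
  | succ k ih =>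
    rcases Nat.lt_or_ge k 1 with hk1 | hk1
    · have : k = 0 := by omega
      subst this
      rw [Function.iterate_one, shift_delta_root]
      have hc : (fun i => lamB lam i 1 * a) = fun i => Wprod lam i (0 + 1) * a := by
        funext i
        simp only [Wprod]
        rw [Finset.Icc_self, Finset.prod_singleton]
      rw [hc]
    · rw [Function.iterate_succ_apply', ih hk1, shift_bfun lam _ k hk1]
      have hc : (fun i => lamB lam i (k + 1) * (Wprod lam i k * a)) =
          fun i => Wprod lam i (k + 1) * a := by
        funext i
        simp only [Wprod]
        rw [Finset.prod_Icc_succ_top (by omega : 1 ≤ k + 1)]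
        ring
      rw [hc]

lemma iterate_apply_bv (lam f : TreeV η κ → ℂ) (i : ℕ) :
    ∀ (k : ℕ) (h : 1 ≤ (i, k).1 ∧ ((i, k).1 : ℕ∞) ≤ η ∧ 1 ≤ (i, k).2),
      (shiftFun (TreeE η κ) lam)^[k] f (Sum.inr ⟨(i, k), h⟩) =
        Wprod lam i k * f (root0 η κ) := by
  intro k
  induction k with
  | zero => intro h; exact absurd h.2.2 (by omega)
  | succ k ih =>
    intro h
    obtain ⟨hi1, hiη, -⟩ := h
    rcases Nat.lt_or_ge k 1 with hk1 | hk1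
    · have : k = 0 := by omega
      subst this
      rw [Function.iterate_one, shift_apply lam _ (edge_bv1 i ⟨hi1, hiη, le_refl 1⟩)]
      congr 1
      simp only [Wprod]
      rw [Finset.Icc_self, Finset.prod_singleton, lamB,
        dif_pos (show 1 ≤ i ∧ (i : ℕ∞) ≤ η ∧ 1 ≤ 1 from ⟨hi1, hiη, le_refl 1⟩)]
    · have hq : 1 ≤ (i, k).1 ∧ ((i, k).1 : ℕ∞) ≤ η ∧ 1 ≤ (i, k).2 := ⟨hi1, hiη, hk1⟩
      rw [Function.iterate_succ_apply',
        shift_apply lam _ (edge_bv i k hq ⟨hi1, hiη, by omega⟩), ih hq]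
      simp only [Wprod]
      rw [Finset.prod_Icc_succ_top (by omega : 1 ≤ k + 1)]
      have hl : lam (Sum.inr ⟨(i, k + 1), ⟨hi1, hiη, by omega⟩⟩ : TreeV η κ) =
          lamB lam i (k + 1) := by
        rw [lamB, dif_pos (show 1 ≤ i ∧ (i : ℕ∞) ≤ η ∧ 1 ≤ k + 1 from ⟨hi1, hiη, by omega⟩)]
      rw [hl]
      ring

lemma iterate_delta_tv (lam : TreeV η κ → ℂ) (m : ℕ) (hm : ((m : ℕ) : ℕ∞) ≤ κ) (a : ℂ)
    (l : ℕ) (hl : l ≤ m) (hml : ((m - l : ℕ) : ℕ∞) ≤ κ) :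
    ∃ b : ℂ, (shiftFun (TreeE η κ) lam)^[l] (delta (Sum.inl ⟨m, hm⟩ : TreeV η κ) a) =
      delta (Sum.inl ⟨m - l, hml⟩ : TreeV η κ) b := by
  induction l with
  | zero => exact ⟨a, rfl⟩
  | succ l ih =>
    have hml' : ((m - l : ℕ) : ℕ∞) ≤ κ := by
      refine le_trans ?_ hm
      exact_mod_cast Nat.sub_le m l
    obtain ⟨b, hb⟩ := ih (by omega) hml'
    have h1 : m - l = (m - (l + 1)) + 1 := by omega
    have hml2 : (((m - (l + 1)) + 1 : ℕ) : ℕ∞) ≤ κ := by rw [← h1]; exact hml'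
    have hv : (Sum.inl ⟨m - l, hml'⟩ : TreeV η κ) = Sum.inl ⟨(m - (l + 1)) + 1, hml2⟩ := by
      exact congrArg Sum.inl (Subtype.ext h1)
    refine ⟨lam (Sum.inl ⟨m - (l + 1), hml⟩ : TreeV η κ) * b, ?_⟩
    rw [Function.iterate_succ_apply', hb, hv]
    exact shift_delta lam (edge_tv _ hml2 hml) (fun u hu => uchild_tv _ hml2 hml hu) b

lemma iterate_delta_bv (lam : TreeV η κ → ℂ) (p : BranchV η) (a : ℂ) (k : ℕ) :
    ∃ (q : BranchV η) (b : ℂ),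
      (shiftFun (TreeE η κ) lam)^[k] (delta (Sum.inr p : TreeV η κ) a) =
        delta (Sum.inr q : TreeV η κ) b := by
  induction k with
  | zero => exact ⟨p, a, rfl⟩
  | succ k ih =>
    obtain ⟨q, b, hb⟩ := ih
    obtain ⟨⟨i, j⟩, hq⟩ := q
    obtain ⟨hi1, hiη, hj⟩ := hq
    have hq' : 1 ≤ (i, j + 1).1 ∧ ((i, j + 1).1 : ℕ∞) ≤ η ∧ 1 ≤ (i, j + 1).2 :=
      ⟨hi1, hiη, by omega⟩
    refine ⟨⟨(i, j + 1), hq'⟩, lam (Sum.inr ⟨(i, j + 1), hq'⟩ : TreeV η κ) * b, ?_⟩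
    rw [Function.iterate_succ_apply', hb]
    exact shift_delta lam (edge_bv i j ⟨hi1, hiη, hj⟩ hq')
      (fun u hu => uchild_bv i j ⟨hi1, hiη, hj⟩ hq' hu) b

lemma branchSum_eq (lam : TreeV η κ → ℂ) (μ : ℕ → Measure ℝ≥0)
    (hμ : ∀ i : ℕ, 1 ≤ i → (i : ℕ∞) ≤ η → IsProbabilityMeasure (μ i))
    (hmom : MomentCond η κ lam μ) (k : ℕ) (hk : 1 ≤ k) :
    branchSum η κ lam μ (fun s => (s : ℝ≥0∞) ^ (k - 1)) =
      ∑' i : Idx η, (‖Wprod lam i.1 k‖₊ : ℝ≥0∞) ^ 2 := by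
  unfold branchSum
  refine tsum_congr fun i => ?_
  haveI := hμ i.1 i.2.1 i.2.2
  obtain ⟨k', rfl⟩ : ∃ t, k = t + 1 := ⟨k - 1, by omega⟩
  have hk1 : k' + 1 - 1 = k' := by omega
  rcases Nat.eq_zero_or_pos k' with hk0 | hk0
  · subst hk0
    have h1 : (fun s : ℝ≥0 => (s : ℝ≥0∞) ^ (0 + 1 - 1)) = fun _ => (1 : ℝ≥0∞) := by
      funext s; simp
    rw [h1, lintegral_one, measure_univ, mul_one]
    have h2 : Wprod lam i.1 (0 + 1) = lamB lam i.1 1 := by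
      simp only [Wprod]
      rw [Finset.Icc_self, Finset.prod_singleton]
    rw [h2]
  · have hmo := hmom k' hk0 i.1 i.2.1 i.2.2
    have h1 : (fun s : ℝ≥0 => (s : ℝ≥0∞) ^ (k' + 1 - 1)) = fun s : ℝ≥0 => (s : ℝ≥0∞) ^ k' := by
      funext s; rw [hk1]
    rw [h1, hmo]
    have h2 : Wprod lam i.1 (k' + 1) =
        lamB lam i.1 1 * ∏ j ∈ Finset.Icc 2 (k' + 1), lamB lam i.1 j := by
      simp only [Wprod]
      rw [Finset.Icc_eq_cons_Ioc (by omega : 1 ≤ k' + 1), Finset.prod_cons, ← Finset.Icc_add_one_left_eq_Ioc]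
      rfl
    rw [h2, nnnorm_mul, ENNReal.coe_mul, mul_pow]

lemma tsum_sq_ne_top_iff (W : Idx η → ℂ) :
    (∑' i : Idx η, (‖W i‖₊ : ℝ≥0∞) ^ 2) ≠ ⊤ ↔ Summable (fun i : Idx η => ‖W i‖ ^ 2) := by
  have h1 : ∀ i : Idx η, ((‖W i‖₊ : ℝ≥0∞)) ^ 2 = ((‖W i‖₊ ^ 2 : ℝ≥0) : ℝ≥0∞) := fun i => by
    rw [ENNReal.coe_pow]
  rw [tsum_congr h1, ENNReal.tsum_coe_ne_top_iff_summable, ← NNReal.summable_coe]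
  have h2 : (fun i : Idx η => ((‖W i‖₊ ^ 2 : ℝ≥0) : ℝ)) = fun i : Idx η => ‖W i‖ ^ 2 := by
    funext i
    push_cast [coe_nnnorm]
    ring
  rw [h2]

lemma summable_W (lam : TreeV η κ → ℂ) (μ : ℕ → Measure ℝ≥0)
    (hμ : ∀ i : ℕ, 1 ≤ i → (i : ℕ∞) ≤ η → IsProbabilityMeasure (μ i))
    (hmom : MomentCond η κ lam μ) (k : ℕ) (hk : 1 ≤ k)
    (hfin : branchSum η κ lam μ (fun s => (s : ℝ≥0∞) ^ (k - 1)) < ⊤) :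
    Summable (fun i : Idx η => ‖Wprod lam i.1 k‖ ^ 2) := by
  rw [branchSum_eq lam μ hμ hmom k hk] at hfin
  exact (tsum_sq_ne_top_iff _).mp hfin.ne

lemma branchSum_top_of (lam : TreeV η κ → ℂ) (μ : ℕ → Measure ℝ≥0)
    (hμ : ∀ i : ℕ, 1 ≤ i → (i : ℕ∞) ≤ η → IsProbabilityMeasure (μ i))
    (hmom : MomentCond η κ lam μ) (k : ℕ) (hk : 1 ≤ k)
    (hs : Summable (fun i : Idx η => ‖Wprod lam i.1 k‖ ^ 2)) :
    branchSum η κ lam μ (fun s => (s : ℝ≥0∞) ^ (k - 1)) ≠ ⊤ := by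
  rw [branchSum_eq lam μ hμ hmom k hk]
  exact (tsum_sq_ne_top_iff _).mpr hs

lemma rpow_two_eq (x : ℝ) : x ^ (2 : ℝ≥0∞).toReal = x ^ (2 : ℕ) := by
  rw [ENNReal.toReal_ofNat]
  exact_mod_cast Real.rpow_natCast x 2

lemma memℓp_bfun (c : ℕ → ℂ) (j : ℕ) (hj : 1 ≤ j)
    (hc : Summable (fun i : Idx η => ‖c i.1‖ ^ 2)) :
    Memℓp (bfun η κ c j) 2 := by
  apply memℓp_gen
  set e : Idx η → TreeV η κ := fun i => Sum.inr ⟨(i.1, j), ⟨i.2.1, i.2.2, hj⟩⟩ with he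
  have einj : Function.Injective e := by
    intro i i' h
    rw [he] at h
    simp only [Sum.inr.injEq, Subtype.mk.injEq, Prod.mk.injEq] at h
    exact Subtype.ext h.1
  have hvan : ∀ u ∉ Set.range e, ‖bfun η κ c j u‖ ^ (2 : ℝ≥0∞).toReal = 0 := by
    intro u hu
    rw [rpow_two_eq]
    cases u with
    | inl b => rw [bfun_inl]; simp
    | inr p =>
      obtain ⟨⟨i, j'⟩, hp⟩ := p
      by_cases hjj : j' = j
      · exfalso
        apply hu
        refine ⟨⟨i, hp.1, hp.2.1⟩, ?_⟩
        rw [he]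
        subst hjj
        rfl
      · rw [bfun_inr]
        simp only [hjj, if_false]
        simp
  refine (einj.summable_iff hvan).mp ?_
  have hcomp : (fun u => ‖bfun η κ c j u‖ ^ (2 : ℝ≥0∞).toReal) ∘ e =
      fun i : Idx η => ‖c i.1‖ ^ 2 := by
    funext i
    simp only [Function.comp_apply, he, bfun_inr, if_true]
    rw [rpow_two_eq]
  rw [hcomp]
  exact hc

lemma branchSum_le_add (lam : TreeV η κ → ℂ) (μ : ℕ → Measure ℝ≥0)
    (g g1 g2 : ℝ≥0 → ℝ≥0∞) (hg : ∀ s, g s ≤ g1 s + g2 s) (h1 : Measurable g1) :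
    branchSum η κ lam μ g ≤ branchSum η κ lam μ g1 + branchSum η κ lam μ g2 := by
  unfold branchSum
  rw [← ENNReal.tsum_add]
  refine ENNReal.tsum_le_tsum fun i => ?_
  rw [← mul_add, ← lintegral_add_left h1]
  exact mul_le_mul_right (lintegral_mono fun s => hg s) _

lemma pow_le_inv_add_pow (s : ℝ≥0) {j m : ℕ} (hj : j ≤ m) :
    (s : ℝ≥0∞) ^ j ≤ (s : ℝ≥0∞)⁻¹ + (s : ℝ≥0∞) ^ m := by
  rcases le_total (s : ℝ≥0∞) 1 with h | h
  · calc (s : ℝ≥0∞) ^ j ≤ 1 := pow_le_one' h j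
      _ ≤ (s : ℝ≥0∞)⁻¹ := ENNReal.one_le_inv.mpr h
      _ ≤ _ := le_self_add
  · calc (s : ℝ≥0∞) ^ j ≤ (s : ℝ≥0∞) ^ m := pow_le_pow_right' h hj
      _ ≤ _ := le_add_self

lemma branchSum_pow_lt_top (lam : TreeV η κ → ℂ) (μ : ℕ → Measure ℝ≥0)
    (hS : branchSum η κ lam μ (fun s => ((s : ℝ≥0∞))⁻¹) ≤ 1)
    {m j : ℕ} (hj : j ≤ m)
    (hfin : branchSum η κ lam μ (fun s => (s : ℝ≥0∞) ^ m) < ⊤) :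
    branchSum η κ lam μ (fun s => (s : ℝ≥0∞) ^ j) < ⊤ := by
  have hmeas : Measurable fun s : ℝ≥0 => ((s : ℝ≥0∞))⁻¹ :=
    (ENNReal.continuous_coe.measurable).inv
  calc branchSum η κ lam μ (fun s => (s : ℝ≥0∞) ^ j)
      ≤ branchSum η κ lam μ (fun s => ((s : ℝ≥0∞))⁻¹) +
        branchSum η κ lam μ (fun s => (s : ℝ≥0∞) ^ m) :=
        branchSum_le_add lam μ _ _ _ (fun s => pow_le_inv_add_pow s hj) hmeas
    _ ≤ 1 + branchSum η κ lam μ (fun s => (s : ℝ≥0∞) ^ m) := by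
        exact add_le_add_left hS _
    _ < ⊤ := ENNReal.add_lt_top.mpr ⟨ENNReal.one_lt_top, hfin⟩

lemma shift_add {V : Type*} (E : V → V → Prop) (lam : V → ℂ) (f g : V → ℂ) :
    shiftFun E lam (f + g) = shiftFun E lam f + shiftFun E lam g := by
  classical
  funext v
  simp only [shiftFun, Pi.add_apply]
  split_ifs with h
  · ring
  · rw [add_zero]

lemma shift_zero {V : Type*} (E : V → V → Prop) (lam : V → ℂ) :
    shiftFun E lam (0 : V → ℂ) = 0 := by
  classical
  funext v
  simp only [shiftFun, Pi.zero_apply]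
  split_ifs with h
  · rw [mul_zero]
  · rfl

lemma iterate_shift_add {V : Type*} (E : V → V → Prop) (lam : V → ℂ) (f g : V → ℂ) (k : ℕ) :
    (shiftFun E lam)^[k] (f + g) = (shiftFun E lam)^[k] f + (shiftFun E lam)^[k] g := by
  induction k with
  | zero => rfl
  | succ k ih => rw [Function.iterate_succ_apply', Function.iterate_succ_apply',
      Function.iterate_succ_apply', ih, shift_add]

lemma iterate_shift_zero {V : Type*} (E : V → V → Prop) (lam : V → ℂ) (k : ℕ) :
    (shiftFun E lam)^[k] (0 : V → ℂ) = 0 := by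
  induction k with
  | zero => rfl
  | succ k ih => rw [Function.iterate_succ_apply', ih, shift_zero]

lemma domPow_zero_mem {V : Type*} (E : V → V → Prop) (lam : V → ℂ) (n : ℕ) :
    (0 : V → ℂ) ∈ domPow E lam n := by
  intro k hk
  rw [iterate_shift_zero]
  exact zero_memℓp

lemma domPow_add_mem {V : Type*} (E : V → V → Prop) (lam : V → ℂ) (n : ℕ)
    {f g : V → ℂ} (hf : f ∈ domPow E lam n) (hg : g ∈ domPow E lam n) :
    f + g ∈ domPow E lam n := by
  intro k hk
  rw [iterate_shift_add]
  exact (hf k hk).add (hg k hk)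

lemma dense_of_singles {V : Type*} (E : V → V → Prop) (lam : V → ℂ) (n : ℕ)
    (hsing : ∀ (v : V) (a : ℂ), delta v a ∈ domPow E lam n) :
    DenselyDefinedPow E lam n := by
  classical
  haveI : Fact ((1 : ℝ≥0∞) ≤ 2) := ⟨one_le_two⟩
  intro F
  have hF := lp.hasSum_single (E := fun _ : V => ℂ) (by norm_num : (2 : ℝ≥0∞) ≠ ⊤) F
  refine mem_closure_of_tendsto hF (Filter.Eventually.of_forall fun t => ?_)
  show ⇑(∑ v ∈ t, lp.single 2 v (F v)) ∈ domPow E lam n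
  induction t using Finset.induction_on with
  | empty =>
    rw [Finset.sum_empty, lp.coeFn_zero]
    exact domPow_zero_mem E lam n
  | insert _ _ hnotmem ih =>
    rw [Finset.sum_insert hnotmem, lp.coeFn_add, coe_single]
    exact domPow_add_mem E lam n (hsing _ _) ih

lemma not_dense_of_vanishing {V : Type*} (E : V → V → Prop) (lam : V → ℂ) (n : ℕ) (v₀ : V)
    (h0 : ∀ f : lp (fun _ : V => ℂ) 2, (⇑f : V → ℂ) ∈ domPow E lam n → (⇑f : V → ℂ) v₀ = 0) :
    ¬ DenselyDefinedPow E lam n := by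
  classical
  intro hd
  have hcont : Continuous fun f : lp (fun _ : V => ℂ) 2 => (⇑f : V → ℂ) v₀ := by
    refine LipschitzWith.continuous (K := 1) (LipschitzWith.mk_one fun f g => ?_)
    rw [dist_eq_norm, dist_eq_norm]
    have h := lp.norm_apply_le_norm (by norm_num : (2 : ℝ≥0∞) ≠ 0) (f - g) v₀
    rw [lp.coeFn_sub] at h
    exact h
  have hclosed : IsClosed {f : lp (fun _ : V => ℂ) 2 | (⇑f : V → ℂ) v₀ = 0} :=
    isClosed_eq hcont continuous_const
  have hsub : closure {f : lp (fun _ : V => ℂ) 2 | (⇑f : V → ℂ) ∈ domPow E lam n} ⊆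
      {f : lp (fun _ : V => ℂ) 2 | (⇑f : V → ℂ) v₀ = 0} :=
    closure_minimal (fun f hf => h0 f hf) hclosed
  have hmem := hd (lp.single (E := fun _ : V => ℂ) 2 v₀ (1 : ℂ))
  have := hsub hmem
  rw [Set.mem_setOf_eq, coe_single, delta_self] at this
  exact one_ne_zero this

lemma apply_root_eq_zero (lam : TreeV η κ → ℂ) (μ : ℕ → Measure ℝ≥0)
    (hμ : ∀ i : ℕ, 1 ≤ i → (i : ℕ∞) ≤ η → IsProbabilityMeasure (μ i))
    (hmom : MomentCond η κ lam μ) (m : ℕ) (hm : 1 ≤ m)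
    (hinf : branchSum η κ lam μ (fun s => (s : ℝ≥0∞) ^ (m - 1)) = ⊤)
    (f : TreeV η κ → ℂ) (hf : Memℓp ((shiftFun (TreeE η κ) lam)^[m] f) 2) :
    f (root0 η κ) = 0 := by
  by_contra h0
  have hs : Summable fun u => ‖(shiftFun (TreeE η κ) lam)^[m] f u‖ ^ (2 : ℝ≥0∞).toReal :=
    (memℓp_gen_iff (by norm_num)).mp hf
  set e : Idx η → TreeV η κ := fun i => Sum.inr ⟨(i.1, m), ⟨i.2.1, i.2.2, hm⟩⟩ with he
  have einj : Function.Injective e := by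
    intro i i' h
    rw [he] at h
    simp only [Sum.inr.injEq, Subtype.mk.injEq, Prod.mk.injEq] at h
    exact Subtype.ext h.1
  have hs2 := hs.comp_injective einj
  have hcomp : (fun u => ‖(shiftFun (TreeE η κ) lam)^[m] f u‖ ^ (2 : ℝ≥0∞).toReal) ∘ e =
      fun i : Idx η => ‖Wprod lam i.1 m‖ ^ 2 * ‖f (root0 η κ)‖ ^ 2 := by
    funext i
    simp only [Function.comp_apply, he]
    rw [iterate_apply_bv lam f i.1 m ⟨i.2.1, i.2.2, hm⟩, rpow_two_eq, norm_mul, mul_pow]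
  rw [hcomp] at hs2
  have hs3 : Summable fun i : Idx η => ‖Wprod lam i.1 m‖ ^ 2 := by
    have hne : (‖f (root0 η κ)‖ ^ 2 : ℝ) ≠ 0 :=
      pow_ne_zero 2 (norm_ne_zero_iff.mpr h0)
    have := hs2.mul_right ((‖f (root0 η κ)‖ ^ 2)⁻¹)
    refine this.congr fun i => ?_
    rw [mul_assoc, mul_inv_cancel₀ hne, mul_one]
  exact branchSum_top_of lam μ hμ hmom m hm hs3 hinf

lemma single_mem_domPow (lam : TreeV η κ → ℂ) (μ : ℕ → Measure ℝ≥0)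
    (hμ : ∀ i : ℕ, 1 ≤ i → (i : ℕ∞) ≤ η → IsProbabilityMeasure (μ i))
    (hmom : MomentCond η κ lam μ) (m : ℕ) (hm : 1 ≤ m)
    (hfin : ∀ j : ℕ, 1 ≤ j → j ≤ m →
      branchSum η κ lam μ (fun s => (s : ℝ≥0∞) ^ (j - 1)) < ⊤)
    (v : TreeV η κ) (a : ℂ) : delta v a ∈ domPow (TreeE η κ) lam m := by
  intro k hk
  cases v with
  | inr p =>
    obtain ⟨q, b, hb⟩ := iterate_delta_bv lam p a k
    rw [hb]
    exact memℓp_delta _ _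
  | inl t =>
    obtain ⟨mm, hmm⟩ := t
    by_cases hkm : k ≤ mm
    · have hml : ((mm - k : ℕ) : ℕ∞) ≤ κ := by
        refine le_trans ?_ hmm
        exact_mod_cast Nat.sub_le mm k
      obtain ⟨b, hb⟩ := iterate_delta_tv lam mm hmm a k hkm hml
      rw [hb]
      exact memℓp_delta _ _
    · have hkm' : mm < k := not_le.mp hkm
      have hml : (((mm - mm : ℕ)) : ℕ∞) ≤ κ := by
        refine le_trans ?_ hmm
        exact_mod_cast Nat.sub_le mm mm
      obtain ⟨b, hb⟩ := iterate_delta_tv lam mm hmm a mm le_rfl hml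
      have hroot : (Sum.inl ⟨mm - mm, hml⟩ : TreeV η κ) = root0 η κ := by
        rw [root0]
        exact congrArg Sum.inl (Subtype.ext (show mm - mm = 0 from Nat.sub_self mm))
      rw [hroot] at hb
      have hsplit : (shiftFun (TreeE η κ) lam)^[k] (delta (Sum.inl ⟨mm, hmm⟩ : TreeV η κ) a) =
          (shiftFun (TreeE η κ) lam)^[k - mm]
            ((shiftFun (TreeE η κ) lam)^[mm] (delta (Sum.inl ⟨mm, hmm⟩ : TreeV η κ) a)) := by
        rw [← Function.iterate_add_apply]
        congr 1
        omega
      rw [hsplit, hb, iterate_delta_root lam b (k - mm) (by omega)]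
      refine memℓp_bfun _ _ (by omega) ?_
      have hsW := summable_W lam μ hμ hmom (k - mm) (by omega)
        (hfin (k - mm) (by omega) (by omega))
      have := hsW.mul_right (‖b‖ ^ 2)
      refine this.congr fun i => ?_
      rw [norm_mul, mul_pow]

lemma dense_iff (lam : TreeV η κ → ℂ) (μ : ℕ → Measure ℝ≥0)
    (hμ : ∀ i : ℕ, 1 ≤ i → (i : ℕ∞) ≤ η → IsProbabilityMeasure (μ i))
    (hmom : MomentCond η κ lam μ)
    (hS : branchSum η κ lam μ (fun s => ((s : ℝ≥0∞))⁻¹) ≤ 1)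
    (m : ℕ) (hm : 1 ≤ m) :
    DenselyDefinedPow (TreeE η κ) lam m ↔
      branchSum η κ lam μ (fun s => (s : ℝ≥0∞) ^ (m - 1)) < ⊤ := by
  constructor
  · intro hd
    by_contra hinf
    rw [not_lt, top_le_iff] at hinf
    exact not_dense_of_vanishing (TreeE η κ) lam m (root0 η κ)
      (fun f hf => apply_root_eq_zero lam μ hμ hmom m hm hinf f (hf m le_rfl)) hd
  · intro hfin
    refine dense_of_singles (TreeE η κ) lam m ?_
    refine single_mem_domPow lam μ hμ hmom m hm ?_
    intro j hj1 hjm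
    exact branchSum_pow_lt_top lam μ hS (by omega : j - 1 ≤ m - 1) hfin

end Wndd

/-- Corollary (wndd): under the hypotheses of the density theorem for `𝒯_{η,κ}`, for
every `n ≥ 1` the following are equivalent: (1) `S_λ^n` is densely defined and
`S_λ^{n+1}` is not; (2) `Σ_{i ∈ J_η} |λ_{i,1}|² ∫₀^∞ s^{n-1} dμ_i(s) < ∞` and
`Σ_{i ∈ J_η} |λ_{i,1}|² ∫₀^∞ s^n dμ_i(s) = ∞`. -/
theorem stmt_2 (η κ : ℕ∞) (hη : 2 ≤ η) (lam : TreeV η κ → ℂ)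
    (hlam : ∀ v : TreeV η κ, HasParent (TreeE η κ) v → lam v ≠ 0)
    (μ : ℕ → Measure ℝ≥0)
    (hμ : ∀ i : ℕ, 1 ≤ i → (i : ℕ∞) ≤ η → IsProbabilityMeasure (μ i))
    (hmom : MomentCond η κ lam μ)
    (hcond : CondI η κ lam μ ∨ CondII η κ lam μ ∨ CondIII η κ lam μ)
    (n : ℕ) (hn : 1 ≤ n) :
    (DenselyDefinedPow (TreeE η κ) lam n ∧ ¬ DenselyDefinedPow (TreeE η κ) lam (n + 1)) ↔
      (branchSum η κ lam μ (fun s => (s : ℝ≥0∞) ^ (n - 1)) < ⊤ ∧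
        branchSum η κ lam μ (fun s => (s : ℝ≥0∞) ^ n) = ⊤) := by
  have hS : branchSum η κ lam μ (fun s => ((s : ℝ≥0∞))⁻¹) ≤ 1 := by
    rcases hcond with h | h | h
    · exact h.2
    · obtain ⟨k, _, _, h1, _, _⟩ := h
      exact le_of_eq h1
    · exact le_of_eq h.2.1
  have h1 := Wndd.dense_iff lam μ hμ hmom hS n hn
  have h2 := Wndd.dense_iff lam μ hμ hmom hS (n + 1) (by omega)
  have h3 : n + 1 - 1 = n := by omega
  rw [h3] at h2
  rw [h1, h2, not_lt, top_le_iff]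
end

section
/- Let S_λ be a weighted shift on a directed tree 𝒯 = (V, E) with weights λ = {λ_v}_{v ∈ V°}. If 𝒯 has no branching vertices (V_≺ = ∅), then D^∞(S_λ) = ⋂_{n ≥ 0} D(S_λ^n) is dense in ℓ²(V). -/
open MeasureTheory ENNReal NNReal

/-- If the directed tree has no branching vertices, then
`D^∞(S_λ) = ⋂_{n ≥ 0} D(S_λ^n)` is dense in `ℓ²(V)`. -/
theorem stmt_4 {V : Type*} (E : V → V → Prop) (hT : IsDirectedTree E) (lam : V → ℂ)
    (hnb : ∀ u : V, ¬ IsBranching E u) :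
    Dense {f : lp (fun _ : V => ℂ) 2 | ∀ n : ℕ, (⇑f : V → ℂ) ∈ domPow E lam n} := by
  classical
  -- Step: one application of the shift preserves finite support.
  have step : ∀ f : V → ℂ, (Function.support f).Finite →
      (Function.support (shiftFun E lam f)).Finite := by
    intro f hf
    set φ : V → V := fun v => if h : ∃ u, E u v then Classical.choose h else v with hφ
    have hsub : Function.support (shiftFun E lam f) ⊆ φ ⁻¹' (Function.support f) := by
      intro v hv
      simp only [Function.mem_support, shiftFun] at hv
      split_ifs at hv with h
      · simp only [Set.mem_preimage, Function.mem_support, hφ, dif_pos h]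
        exact fun h0 => hv (by rw [h0, mul_zero])
      · exact absurd rfl hv
    refine Set.Finite.subset ?_ hsub
    have hcover : φ ⁻¹' (Function.support f) ⊆
        ⋃ u ∈ Function.support f, ({u} ∪ {v | E u v}) := by
      intro v hv
      simp only [Set.mem_preimage] at hv
      refine Set.mem_biUnion hv ?_
      by_cases h : ∃ u, E u v
      · right
        have : E (Classical.choose h) v := Classical.choose_spec h
        simpa [hφ, dif_pos h] using this
      · left; simp [hφ, dif_neg h]
    refine Set.Finite.subset (hf.biUnion fun u _ => ?_) hcover
    refine (Set.finite_singleton u).union ?_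
    have hsing : ({v | E u v} : Set V).Subsingleton := by
      intro a ha b hb
      by_contra hab
      exact hnb u ⟨a, b, ha, hb, hab⟩
    exact hsing.finite
  have iter : ∀ (k : ℕ) (f : V → ℂ), (Function.support f).Finite →
      (Function.support ((shiftFun E lam)^[k] f)).Finite := by
    intro k
    induction k with
    | zero => intro f hf; simpa using hf
    | succ k ih =>
      intro f hf
      rw [Function.iterate_succ_apply']
      exact step _ (ih f hf)
  -- Finitely supported elements belong to the set.
  have hmem : ∀ f : lp (fun _ : V => ℂ) 2, (Function.support (⇑f)).Finite →
      f ∈ {f : lp (fun _ : V => ℂ) 2 | ∀ n : ℕ, (⇑f : V → ℂ) ∈ domPow E lam n} := by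
    intro f hf n k _
    exact (memℓp_zero (iter k _ hf)).of_exponent_ge (by norm_num)
  -- Density via partial sums of singles.
  intro f
  have hsum := lp.hasSum_single (p := 2) (E := fun _ : V => ℂ) (by norm_num) f
  refine mem_closure_of_tendsto hsum (Filter.Eventually.of_forall fun s => ?_)
  refine hmem _ ?_
  have : ⇑(∑ i ∈ s, lp.single 2 i (f i)) = ∑ i ∈ s, ⇑(lp.single 2 i (f i)) :=
    lp.coeFn_sum _ _
  rw [this]
  refine Set.Finite.subset s.finite_toSet ?_
  intro v hv
  simp only [Function.mem_support, Finset.sum_apply] at hv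
  by_contra hvs
  apply hv
  refine Finset.sum_eq_zero fun i hi => ?_
  exact lp.single_apply_ne 2 i _ (fun h => hvs (h ▸ hi))
end

section
/- Let S_λ be a weighted shift on a directed tree 𝒯 = (V, E) with weights λ = {λ_v}_{v ∈ V°}, and suppose {μ_v}_{v ∈ V} (Borel probability measures on ℝ₊) together with {ε_v}_{v ∈ V} (nonnegative reals) satisfy the consistency condition. Then for every u ∈ V and every v ∈ Chi(u) with λ_v ≠ 0, one has μ_v({0}) = 0. -/
open MeasureTheory ENNReal NNReal

/-- If `{μ_v}, {ε_v}` satisfy the consistency condition, then `μ_v({0}) = 0` for every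
child `v` of any `u` with `λ_v ≠ 0`. -/
theorem stmt_7 {V : Type*} (E : V → V → Prop) (hT : IsDirectedTree E) (lam : V → ℂ)
    (μ : V → Measure ℝ≥0) (hμ : ∀ v : V, IsProbabilityMeasure (μ v))
    (ε : V → ℝ) (hε : ∀ v : V, 0 ≤ ε v) (hcons : Consistent E lam μ ε)
    (u v : V) (huv : E u v) (hlam : lam v ≠ 0) :
    μ v {0} = 0 := by
  by_contra h0
  have hc := hcons u {0} (measurableSet_singleton 0)
  have hint : ∫⁻ t in ({0} : Set ℝ≥0), ((t : ℝ≥0∞))⁻¹ ∂(μ v) = ∞ * μ v {0} := by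
    rw [MeasureTheory.lintegral_singleton]
    simp
  have hterm : (‖lam v‖₊ : ℝ≥0∞) ^ 2 *
      ∫⁻ t in ({0} : Set ℝ≥0), ((t : ℝ≥0∞))⁻¹ ∂(μ v) = ∞ := by
    rw [hint, ENNReal.mul_eq_top]
    left
    constructor
    · simp [pow_eq_zero_iff, hlam]
    · exact ENNReal.top_mul h0
  have hle : (∞ : ℝ≥0∞) ≤ μ u {0} := by
    rw [hc]
    refine le_trans ?_ le_self_add
    rw [← hterm]
    exact ENNReal.le_tsum (⟨v, huv⟩ : {v : V // E u v})
  have : (∞ : ℝ≥0∞) ≤ 1 := hle.trans prob_le_one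
  simp at this
end

section
/- Let S_λ be a weighted shift on a directed tree 𝒯 = (V, E) with weights λ = {λ_v}_{v ∈ V°}, and suppose {μ_v}_{v ∈ V} (Borel probability measures on ℝ₊) together with {ε_v}_{v ∈ V} (nonnegative reals) satisfy the consistency condition. Then for every u ∈ V and every Borel set σ ⊆ ℝ₊ (equality in [0, ∞]): ∫_σ t dμ_u(t) = Σ_{v ∈ Chi(u)} |λ_v|² μ_v(σ). -/
open MeasureTheory ENNReal NNReal

/-- If `{μ_v}, {ε_v}` satisfy the consistency condition, then
`∫_σ t dμ_u(t) = Σ_{v ∈ Chi(u)} |λ_v|² μ_v(σ)` for every `u ∈ V` and Borel `σ ⊆ ℝ₊`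
(an identity in `[0,∞]`). -/
theorem stmt_8 {V : Type*} (E : V → V → Prop) (hT : IsDirectedTree E) (lam : V → ℂ)
    (μ : V → Measure ℝ≥0) (hμ : ∀ v : V, IsProbabilityMeasure (μ v))
    (ε : V → ℝ) (hε : ∀ v : V, 0 ≤ ε v) (hcons : Consistent E lam μ ε)
    (u : V) (σ : Set ℝ≥0) (hσ : MeasurableSet σ) :
    ∫⁻ t in σ, (t : ℝ≥0∞) ∂(μ u) =
      ∑' v : {v : V // E u v}, (‖lam (v : V)‖₊ : ℝ≥0∞) ^ 2 * μ (v : V) σ := by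
  have hinv : Measurable (fun t : ℝ≥0 => ((t : ℝ≥0∞))⁻¹) :=
    measurable_coe_nnreal_ennreal.inv
  -- Step 1: children with nonzero weight give no mass to {0}
  have hzero : ∀ v : {v : V // E u v}, lam (v : V) ≠ 0 → μ (v : V) {0} = 0 := by
    intro v hv
    by_contra hne
    have h0 := hcons u {0} (measurableSet_singleton 0)
    have hterm : (‖lam (v : V)‖₊ : ℝ≥0∞) ^ 2 *
        ∫⁻ t in {0}, ((t : ℝ≥0∞))⁻¹ ∂(μ (v : V)) = ⊤ := by
      rw [lintegral_singleton]
      simp only [ENNReal.coe_zero, ENNReal.inv_zero]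
      rw [ENNReal.top_mul hne, ENNReal.mul_top]
      simp [hv]
    have hle : (⊤ : ℝ≥0∞) ≤ μ u {0} := by
      rw [h0]
      calc (⊤ : ℝ≥0∞) = (‖lam (v : V)‖₊ : ℝ≥0∞) ^ 2 *
            ∫⁻ t in {0}, ((t : ℝ≥0∞))⁻¹ ∂(μ (v : V)) := hterm.symm
        _ ≤ _ := le_add_right (ENNReal.le_tsum v)
    exact (measure_lt_top (μ u) _).ne (top_le_iff.mp hle)
  -- Step 2: μ u equals the explicit measure ν
  set ν : Measure ℝ≥0 := (Measure.sum (fun v : {v : V // E u v} =>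
      ((‖lam (v : V)‖₊ : ℝ≥0∞) ^ 2) •
        (μ (v : V)).withDensity (fun t => ((t : ℝ≥0∞))⁻¹)))
      + (ENNReal.ofReal (ε u)) • Measure.dirac (0 : ℝ≥0) with hνdef
  have hν : μ u = ν := by
    ext s hs
    rw [hcons u s hs]
    simp only [hνdef, Measure.coe_add, Pi.add_apply, Measure.sum_apply _ hs,
      Measure.smul_apply, smul_eq_mul, withDensity_apply _ hs]
  rw [hν, hνdef, Measure.restrict_add, lintegral_add_measure,
      Measure.restrict_sum _ hσ, lintegral_sum_measure]
  -- dirac part is zero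
  have hdirac : ∫⁻ t, (t : ℝ≥0∞) ∂(((ENNReal.ofReal (ε u)) •
      Measure.dirac (0 : ℝ≥0)).restrict σ) = 0 := by
    refine le_antisymm ?_ zero_le
    calc ∫⁻ t, (t : ℝ≥0∞) ∂(((ENNReal.ofReal (ε u)) •
          Measure.dirac (0 : ℝ≥0)).restrict σ)
        ≤ ∫⁻ t, (t : ℝ≥0∞) ∂((ENNReal.ofReal (ε u)) • Measure.dirac (0 : ℝ≥0)) :=
          lintegral_mono' Measure.restrict_le_self le_rfl
      _ = 0 := by rw [lintegral_smul_measure, lintegral_dirac]; simp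
  rw [hdirac, add_zero]
  refine tsum_congr fun v => ?_
  rw [Measure.restrict_smul, lintegral_smul_measure, restrict_withDensity hσ,
      lintegral_withDensity_eq_lintegral_mul _ hinv measurable_coe_nnreal_ennreal]
  have hind : ∀ t : ℝ≥0, ((t : ℝ≥0∞))⁻¹ * (t : ℝ≥0∞) =
      ({(0 : ℝ≥0)}ᶜ : Set ℝ≥0).indicator (fun _ => 1) t := by
    intro t
    by_cases ht : t = 0
    · simp [ht]
    · rw [Set.indicator_of_mem (by simpa using ht)]
      exact ENNReal.inv_mul_cancel (by simpa using ht) ENNReal.coe_ne_top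
  have hcalc : (∫⁻ t, ((fun t : ℝ≥0 => ((t : ℝ≥0∞))⁻¹) * (fun t : ℝ≥0 => (t : ℝ≥0∞))) t
      ∂((μ (v : V)).restrict σ)) = μ (v : V) ({(0 : ℝ≥0)}ᶜ ∩ σ) :=
    calc (∫⁻ t, ((fun t : ℝ≥0 => ((t : ℝ≥0∞))⁻¹) * (fun t : ℝ≥0 => (t : ℝ≥0∞))) t
        ∂((μ (v : V)).restrict σ))
        = ∫⁻ t, ({(0 : ℝ≥0)}ᶜ : Set ℝ≥0).indicator (fun _ => 1) t
            ∂((μ (v : V)).restrict σ) := lintegral_congr fun t => hind t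
      _ = ∫⁻ _ in {(0 : ℝ≥0)}ᶜ, 1 ∂((μ (v : V)).restrict σ) :=
          lintegral_indicator (measurableSet_singleton (0 : ℝ≥0)).compl _
      _ = ((μ (v : V)).restrict σ) {(0 : ℝ≥0)}ᶜ := setLIntegral_one _
      _ = μ (v : V) ({(0 : ℝ≥0)}ᶜ ∩ σ) :=
          Measure.restrict_apply (measurableSet_singleton (0 : ℝ≥0)).compl
  rw [hcalc]
  by_cases hl : lam (v : V) = 0
  · simp [hl]
  · congr 1
    refine le_antisymm (measure_mono Set.inter_subset_right) ?_
    have h0 := hzero v hl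
    calc μ (v : V) σ ≤ μ (v : V) (({(0 : ℝ≥0)}ᶜ ∩ σ) ∪ {0}) := by
          refine measure_mono fun t ht => ?_
          by_cases h : t = 0
          · exact Or.inr h
          · exact Or.inl ⟨h, ht⟩
      _ ≤ μ (v : V) ({(0 : ℝ≥0)}ᶜ ∩ σ) + μ (v : V) {0} := measure_union_le _ _
      _ = μ (v : V) ({(0 : ℝ≥0)}ᶜ ∩ σ) := by rw [h0, add_zero]
end

section
/- For every positive integer n and every κ ∈ {0, 1, 2, …} ∪ {∞}, there exist nonzero weights λ = {λ_v}_{v ∈ V_{∞,κ}°} ⊆ ℂ on the directed tree 𝒯_{∞,κ} and real numbers q_i ∈ (0, ∞) (i a positive integer) such that the Dirac measures μ_i = δ_{q_i} satisfy the moment condition ∫₀^∞ s^m dμ_i(s) = |λ_{i,2} λ_{i,3} ⋯ λ_{i,m+1}|² for all positive integers m and all i, together with the appropriate consistency condition among (i) κ = 0 and Σ_i |λ_{i,1}|² q_i^{−1} ≤ 1; (ii) 0 < κ < ∞, Σ_i |λ_{i,1}|² q_i^{−1} = 1, |λ_0 ⋯ λ_{−(l−1)}|² Σ_i |λ_{i,1}|²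 q_i^{−(l+1)} = 1 for l ∈ J_{κ−1}, and |λ_0 ⋯ λ_{−(κ−1)}|² Σ_i |λ_{i,1}|² q_i^{−(κ+1)} ≤ 1; (iii) κ = ∞ and the equalities of (ii) hold for all positive integers l; and such that the weighted shift S_λ on 𝒯_{∞,κ} has S_λ^n densely defined while S_λ^{n+1} is not densely defined. -/
open MeasureTheory ENNReal NNReal

/-- `Σ_{i=1}^∞ |λ_{i,1}|² q_i^{-(l+1)}`, with values in `[0,∞]` (for `μ_i = δ_{q_i}` this
is `Σ_i |λ_{i,1}|² ∫₀^∞ s^{-(l+1)} dμ_i(s)`). -/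
noncomputable def diracSum (κ : ℕ∞) (lam : TreeV ⊤ κ → ℂ) (q : ℕ → ℝ≥0) (l : ℕ) :
    ℝ≥0∞ :=
  ∑' i : {i : ℕ // 1 ≤ i},
    (‖lamB lam (i : ℕ) 1‖₊ : ℝ≥0∞) ^ 2 * (((q (i : ℕ)) : ℝ≥0∞) ^ (l + 1))⁻¹

namespace JJS11

/-! ### The basic series -/

noncomputable def T (n l : ℕ) : ℝ≥0∞ :=
  ∑' i : {i : ℕ // 1 ≤ i}, (((i : ℕ) : ℝ≥0∞) ^ (n + l + 2))⁻¹

lemma nnnorm_coe_nnreal (x : ℝ≥0) : ‖(x : ℝ)‖₊ = x := by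
  rw [Real.nnnorm_of_nonneg x.coe_nonneg]
  rfl

lemma nnnorm_coe_nnreal_c (x : ℝ≥0) : ‖((x : ℝ) : ℂ)‖₊ = x := by
  rw [Complex.nnnorm_real, nnnorm_coe_nnreal]

lemma one_le_T (n l : ℕ) : 1 ≤ T n l := by
  have h := ENNReal.le_tsum (f := fun i : {i : ℕ // 1 ≤ i} =>
    (((i : ℕ) : ℝ≥0∞) ^ (n + l + 2))⁻¹) ⟨1, le_refl 1⟩
  simpa [T] using h

lemma summable_pow_inv {m : ℕ} (hm : 2 ≤ m) :
    Summable (fun i : {i : ℕ // 1 ≤ i} => (((i : ℕ) : ℝ) ^ m)⁻¹) :=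
  (Real.summable_nat_pow_inv.2 (by omega)).comp_injective Subtype.val_injective

lemma summable_pow_inv_nnreal {m : ℕ} (hm : 2 ≤ m) :
    Summable (fun i : {i : ℕ // 1 ≤ i} => (((i : ℕ) : ℝ≥0) ^ m)⁻¹) := by
  rw [← NNReal.summable_coe]
  have := summable_pow_inv hm
  refine this.congr fun i => ?_
  push_cast
  rfl

lemma T_ne_top (n l : ℕ) : T n l ≠ ∞ := by
  have hle : T n l ≤ ∑' i : {i : ℕ // 1 ≤ i}, (((i : ℕ) : ℝ≥0) ^ 2 : ℝ≥0∞)⁻¹ := by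
    refine ENNReal.tsum_le_tsum fun i => ?_
    refine ENNReal.inv_le_inv.2 ?_
    rw [ENNReal.coe_natCast]
    exact pow_le_pow_right₀ (by exact_mod_cast (i.2 : 1 ≤ (i:ℕ))) (by omega)
  refine ne_top_of_le_ne_top ?_ hle
  have heq : ∀ i : {i : ℕ // 1 ≤ i},
      (((i : ℕ) : ℝ≥0) ^ 2 : ℝ≥0∞)⁻¹ = (((((i:ℕ) : ℝ≥0) ^ 2)⁻¹ : ℝ≥0) : ℝ≥0∞) := by
    intro i
    rw [ENNReal.coe_inv (pow_ne_zero _ (by exact_mod_cast Nat.one_le_iff_ne_zero.1 i.2)), ENNReal.coe_pow]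
  rw [tsum_congr heq]
  rw [ENNReal.tsum_coe_ne_top_iff_summable]
  exact summable_pow_inv_nnreal le_rfl

noncomputable def tau (n l : ℕ) : ℝ≥0 := (T n l).toNNReal

lemma coe_tau (n l : ℕ) : ((tau n l : ℝ≥0) : ℝ≥0∞) = T n l :=
  ENNReal.coe_toNNReal (T_ne_top n l)

lemma one_le_tau (n l : ℕ) : 1 ≤ tau n l := by
  have := one_le_T n l
  rw [← coe_tau] at this
  exact_mod_cast this

lemma tau_pos (n l : ℕ) : 0 < tau n l := lt_of_lt_of_le one_pos (one_le_tau n l)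

lemma tau_ne_zero (n l : ℕ) : tau n l ≠ 0 := (tau_pos n l).ne'

/-! ### The weights -/

noncomputable def aw (n i : ℕ) : ℝ≥0 :=
  NNReal.sqrt ((tau n 0)⁻¹ * (((i : ℝ≥0)) ^ (n + 1))⁻¹)

lemma aw_sq (n i : ℕ) : (aw n i) ^ 2 = (tau n 0)⁻¹ * (((i : ℝ≥0)) ^ (n + 1))⁻¹ :=
  NNReal.sq_sqrt _

lemma aw_ne_zero (n : ℕ) {i : ℕ} (hi : 1 ≤ i) : aw n i ≠ 0 := by
  rw [aw, ne_eq, NNReal.sqrt_eq_zero]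
  refine mul_ne_zero (inv_ne_zero (tau_ne_zero n 0)) (inv_ne_zero (pow_ne_zero _ ?_))
  exact_mod_cast Nat.one_le_iff_ne_zero.1 hi

noncomputable def tw (n l : ℕ) : ℝ≥0 := NNReal.sqrt (tau n l * (tau n (l + 1))⁻¹)

lemma tw_ne_zero (n l : ℕ) : tw n l ≠ 0 := by
  rw [tw, ne_eq, NNReal.sqrt_eq_zero]
  simp [tau_ne_zero]

lemma prod_tw_sq (n l : ℕ) :
    (∏ j ∈ Finset.range l, tw n j) ^ 2 = tau n 0 * (tau n l)⁻¹ := by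
  induction l with
  | zero => simp [mul_inv_cancel₀ (tau_ne_zero n 0)]
  | succ l ih =>
      rw [Finset.prod_range_succ, mul_pow, ih, tw, NNReal.sq_sqrt]
      rw [mul_assoc, ← mul_assoc (tau n l)⁻¹, inv_mul_cancel₀ (tau_ne_zero n l), one_mul]

/-! ### lam values -/

noncomputable def lamF (n : ℕ) (κ : ℕ∞) : TreeV ⊤ κ → ℂ
  | Sum.inl a => ((tw n a.1 : ℝ) : ℂ)
  | Sum.inr p => if p.1.2 = 1 then ((aw n p.1.1 : ℝ) : ℂ)
      else ((NNReal.sqrt (p.1.1 : ℝ≥0) : ℝ) : ℂ)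

lemma lamB_one (n : ℕ) (κ : ℕ∞) {i : ℕ} (hi : 1 ≤ i) :
    lamB (lamF n κ) i 1 = ((aw n i : ℝ) : ℂ) := by
  rw [lamB, dif_pos (⟨hi, le_top, le_rfl⟩ : 1 ≤ i ∧ (i:ℕ∞) ≤ ⊤ ∧ 1 ≤ 1)]
  simp [lamF]

lemma lamB_ge2 (n : ℕ) (κ : ℕ∞) {i j : ℕ} (hi : 1 ≤ i) (hj : 2 ≤ j) :
    lamB (lamF n κ) i j = ((NNReal.sqrt (i : ℝ≥0) : ℝ) : ℂ) := by
  rw [lamB, dif_pos (⟨hi, le_top, by omega⟩ : 1 ≤ i ∧ (i:ℕ∞) ≤ ⊤ ∧ 1 ≤ j)]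
  simp only [lamF]
  rw [if_neg (by omega)]

lemma lamT_eq (n : ℕ) {κ : ℕ∞} {l : ℕ} (hl : (l : ℕ∞) ≤ κ) :
    lamT (lamF n κ) l = ((tw n l : ℝ) : ℂ) := by
  rw [lamT, dif_pos hl]; rfl

/-! ### the sums -/

lemma diracSum_eq (n : ℕ) (κ : ℕ∞) (l : ℕ) :
    diracSum κ (lamF n κ) (fun i => (i : ℝ≥0)) l = ((tau n 0 : ℝ≥0) : ℝ≥0∞)⁻¹ * T n l := by
  rw [diracSum, T, ← ENNReal.tsum_mul_left]
  refine tsum_congr fun i => ?_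
  have hi : 1 ≤ (i : ℕ) := i.2
  have hne : ((i : ℕ) : ℝ≥0∞) ≠ 0 := by exact_mod_cast Nat.one_le_iff_ne_zero.1 hi
  have htop : ((i : ℕ) : ℝ≥0∞) ≠ ⊤ := by simp
  rw [lamB_one n κ hi]
  have h1 : (‖((aw n (i : ℕ) : ℝ) : ℂ)‖₊ : ℝ≥0∞) = ((aw n (i : ℕ) : ℝ≥0) : ℝ≥0∞) := by
    simp
  rw [h1, ← ENNReal.coe_pow, aw_sq, ENNReal.coe_mul,
    ENNReal.coe_inv (tau_ne_zero n 0),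
    ENNReal.coe_inv (pow_ne_zero _ (by exact_mod_cast Nat.one_le_iff_ne_zero.1 hi)),
    ENNReal.coe_pow, ENNReal.coe_natCast]
  rw [mul_assoc]
  congr 1
  rw [← ENNReal.mul_inv (Or.inl (pow_ne_zero _ hne)) (Or.inl (ENNReal.pow_ne_top htop)),
    ← pow_add]
  congr 2
  omega

lemma norm_prod_lamT (n : ℕ) {κ : ℕ∞} {l : ℕ} (hl : ∀ j < l, (j : ℕ∞) ≤ κ) :
    (‖∏ j ∈ Finset.range l, lamT (lamF n κ) j‖₊ : ℝ≥0∞) ^ 2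
      = ((tau n 0 : ℝ≥0) : ℝ≥0∞) * ((tau n l : ℝ≥0) : ℝ≥0∞)⁻¹ := by
  have h : ∏ j ∈ Finset.range l, lamT (lamF n κ) j
      = (((∏ j ∈ Finset.range l, tw n j : ℝ≥0) : ℝ) : ℂ) := by
    rw [Finset.prod_congr rfl fun j hj => lamT_eq n (hl j (Finset.mem_range.1 hj))]
    push_cast
    rfl
  rw [h]
  have h1 : (‖(((∏ j ∈ Finset.range l, tw n j : ℝ≥0) : ℝ) : ℂ)‖₊ : ℝ≥0∞)
      = ((∏ j ∈ Finset.range l, tw n j : ℝ≥0) : ℝ≥0∞) := by simp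
  rw [h1, ← ENNReal.coe_pow, prod_tw_sq, ENNReal.coe_mul,
    ENNReal.coe_inv (tau_ne_zero n l)]

lemma cond_eq (n : ℕ) {κ : ℕ∞} {l : ℕ} (hl : ∀ j < l, (j : ℕ∞) ≤ κ) :
    (‖∏ j ∈ Finset.range l, lamT (lamF n κ) j‖₊ : ℝ≥0∞) ^ 2 *
      diracSum κ (lamF n κ) (fun i => (i : ℝ≥0)) l = 1 := by
  rw [norm_prod_lamT n hl, diracSum_eq, ← coe_tau n l, mul_mul_mul_comm,
    ENNReal.mul_inv_cancel (by exact_mod_cast tau_ne_zero n 0) ENNReal.coe_ne_top,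
    ENNReal.inv_mul_cancel (by exact_mod_cast tau_ne_zero n l) ENNReal.coe_ne_top, one_mul]

lemma diracSum_zero (n : ℕ) (κ : ℕ∞) :
    diracSum κ (lamF n κ) (fun i => (i : ℝ≥0)) 0 = 1 := by
  have h := cond_eq n (κ := κ) (l := 0) (fun j hj => absurd hj (by omega))
  simpa using h

/-! ### moments -/

lemma moment (n : ℕ) (κ : ℕ∞) {m i : ℕ} (hm : 1 ≤ m) (hi : 1 ≤ i) :
    (∫⁻ s, (s : ℝ≥0∞) ^ m ∂(Measure.dirac (i : ℝ≥0))) =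
      (‖∏ j ∈ Finset.Icc 2 (m + 1), lamB (lamF n κ) i j‖₊ : ℝ≥0∞) ^ 2 := by
  rw [lintegral_dirac]
  have h : ∏ j ∈ Finset.Icc 2 (m + 1), lamB (lamF n κ) i j
      = ((NNReal.sqrt (i : ℝ≥0) : ℝ) : ℂ) ^ m := by
    rw [Finset.prod_congr rfl fun j hj => lamB_ge2 n κ hi (Finset.mem_Icc.1 hj).1,
      Finset.prod_const, Nat.card_Icc]
    congr 1
  rw [h]
  have h1 : (‖((NNReal.sqrt (i : ℝ≥0) : ℝ) : ℂ) ^ m‖₊ : ℝ≥0∞)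
      = (((NNReal.sqrt (i : ℝ≥0)) ^ m : ℝ≥0) : ℝ≥0∞) := by
    rw [nnnorm_pow, nnnorm_coe_nnreal_c]
  have h2 : ((NNReal.sqrt (i : ℝ≥0)) ^ m) ^ 2 = (i : ℝ≥0) ^ m := by
    rw [← pow_mul, mul_comm, pow_mul, NNReal.sq_sqrt]
  rw [h1]
  exact_mod_cast (congrArg (fun x : ℝ≥0 => (x : ℝ≥0∞)) h2).symm


/-! ### Tree structure lemmas -/

lemma treeE_unique {κ : ℕ∞} : ∀ {u u' v : TreeV ⊤ κ},
    TreeE ⊤ κ u v → TreeE ⊤ κ u' v → u = u' := by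
  rintro (a | p) (b | q) (c | r) h h' <;> simp only [TreeE] at h h'
  · exact congrArg Sum.inl (Subtype.ext (by omega))
  · exact congrArg Sum.inl (Subtype.ext (by omega))
  · exfalso; have h3 : 1 ≤ q.1.2 := q.2.2.2; omega
  · exfalso; have h3 : 1 ≤ p.1.2 := p.2.2.2; omega
  · refine congrArg Sum.inr (Subtype.ext (Prod.ext ?_ ?_)) <;> omega

lemma shift_apply {κ : ℕ∞} (lam f : TreeV ⊤ κ → ℂ) {v u₀ : TreeV ⊤ κ}
    (hE : TreeE ⊤ κ u₀ v) : shiftFun (TreeE ⊤ κ) lam f v = lam v * f u₀ := by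
  have hex : ∃ u, TreeE ⊤ κ u v := ⟨u₀, hE⟩
  simp only [shiftFun]
  rw [dif_pos hex]
  exact congrArg (fun u => lam v * f u) (treeE_unique (Classical.choose_spec hex) hE)

lemma shift_apply_none {κ : ℕ∞} (lam f : TreeV ⊤ κ → ℂ) {v : TreeV ⊤ κ}
    (h : ¬ ∃ u, TreeE ⊤ κ u v) : shiftFun (TreeE ⊤ κ) lam f v = 0 := by
  simp only [shiftFun]
  rw [dif_neg h]

def v0 {κ : ℕ∞} : TreeV ⊤ κ := Sum.inl ⟨0, by simp⟩

lemma sh_inl {κ : ℕ∞} (lam f : TreeV ⊤ κ → ℂ) (a : TrunkV κ)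
    (h : ((a.1 + 1 : ℕ) : ℕ∞) ≤ κ) :
    shiftFun (TreeE ⊤ κ) lam f (Sum.inl a) =
      lam (Sum.inl a) * f (Sum.inl ⟨a.1 + 1, h⟩) :=
  shift_apply lam f (by exact rfl)

lemma sh_inl_root {κ : ℕ∞} (lam f : TreeV ⊤ κ → ℂ) (a : TrunkV κ)
    (h : ¬ ((a.1 + 1 : ℕ) : ℕ∞) ≤ κ) :
    shiftFun (TreeE ⊤ κ) lam f (Sum.inl a) = 0 := by
  refine shift_apply_none lam f ?_
  rintro ⟨(b | q), hb⟩
  · simp only [TreeE] at hb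
    refine h ?_
    have := b.2
    rw [hb] at this
    exact_mod_cast this
  · exact hb

lemma sh_inr_one {κ : ℕ∞} (lam f : TreeV ⊤ κ → ℂ) (p : BranchV ⊤) (h1 : p.1.2 = 1) :
    shiftFun (TreeE ⊤ κ) lam f (Sum.inr p) = lam (Sum.inr p) * f v0 :=
  shift_apply lam f (by exact ⟨rfl, h1⟩)

lemma sh_inr_ge2 {κ : ℕ∞} (lam f : TreeV ⊤ κ → ℂ) (p : BranchV ⊤) (h2 : 2 ≤ p.1.2) :
    shiftFun (TreeE ⊤ κ) lam f (Sum.inr p) =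
      lam (Sum.inr p) * f (Sum.inr ⟨(p.1.1, p.1.2 - 1), ⟨p.2.1, le_top, by omega⟩⟩) :=
  shift_apply lam f (by exact ⟨rfl, by show p.1.2 = p.1.2 - 1 + 1; omega⟩)

/-! ### Linearity of the shift -/

lemma sh_add {κ : ℕ∞} (lam f g : TreeV ⊤ κ → ℂ) :
    shiftFun (TreeE ⊤ κ) lam (f + g)
      = shiftFun (TreeE ⊤ κ) lam f + shiftFun (TreeE ⊤ κ) lam g := by
  funext v
  simp only [shiftFun, Pi.add_apply]
  split
  · ring
  · rw [add_zero]

lemma sh_smul {κ : ℕ∞} (lam : TreeV ⊤ κ → ℂ) (c : ℂ) (f : TreeV ⊤ κ → ℂ) :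
    shiftFun (TreeE ⊤ κ) lam (c • f) = c • shiftFun (TreeE ⊤ κ) lam f := by
  funext v
  simp only [shiftFun, Pi.smul_apply, smul_eq_mul]
  split
  · ring
  · rw [mul_zero]

lemma sh_zero {κ : ℕ∞} (lam : TreeV ⊤ κ → ℂ) :
    shiftFun (TreeE ⊤ κ) lam 0 = 0 := by
  funext v
  simp only [shiftFun, Pi.zero_apply]
  split
  · rw [mul_zero]
  · rfl

lemma sh_iter_add {κ : ℕ∞} (lam : TreeV ⊤ κ → ℂ) (k : ℕ) (f g : TreeV ⊤ κ → ℂ) :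
    (shiftFun (TreeE ⊤ κ) lam)^[k] (f + g)
      = (shiftFun (TreeE ⊤ κ) lam)^[k] f + (shiftFun (TreeE ⊤ κ) lam)^[k] g := by
  induction k generalizing f g with
  | zero => rfl
  | succ k ih => rw [Function.iterate_succ_apply, Function.iterate_succ_apply,
      Function.iterate_succ_apply, sh_add, ih]

lemma sh_iter_smul {κ : ℕ∞} (lam : TreeV ⊤ κ → ℂ) (k : ℕ) (c : ℂ) (f : TreeV ⊤ κ → ℂ) :
    (shiftFun (TreeE ⊤ κ) lam)^[k] (c • f)
      = c • (shiftFun (TreeE ⊤ κ) lam)^[k] f := by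
  induction k generalizing f with
  | zero => rfl
  | succ k ih => rw [Function.iterate_succ_apply, Function.iterate_succ_apply,
      sh_smul, ih]

lemma sh_iter_zero {κ : ℕ∞} (lam : TreeV ⊤ κ → ℂ) (k : ℕ) :
    (shiftFun (TreeE ⊤ κ) lam)^[k] 0 = 0 := by
  induction k with
  | zero => rfl
  | succ k ih => rw [Function.iterate_succ_apply, sh_zero, ih]

/-! ### eFun -/

lemma eFun_self {V : Type*} (u : V) : eFun u u = 1 := by
  simp [eFun]

lemma eFun_ne {V : Type*} {u v : V} (h : v ≠ u) : eFun u v = 0 := by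
  simp [eFun, Set.indicator_of_notMem, h]

lemma memℓp_of_support_singleton {V : Type*} (f : V → ℂ) (u : V)
    (h : ∀ v, v ≠ u → f v = 0) : Memℓp f 2 := by
  classical
  refine memℓp_gen ?_
  refine summable_of_ne_finset_zero (s := {u}) fun v hv => ?_
  rw [h v (by simpa using hv)]
  simp only [norm_zero]
  rw [Real.zero_rpow (by norm_num)]

/-! ### The functions Λ^k e₀ -/

noncomputable def gfun (n : ℕ) (κ : ℕ∞) (k : ℕ) : TreeV ⊤ κ → ℂ
  | Sum.inl _ => 0
  | Sum.inr p => if p.1.2 = k then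
      (((aw n p.1.1 * NNReal.sqrt (p.1.1 : ℝ≥0) ^ (k - 1) : ℝ≥0) : ℝ) : ℂ) else 0

lemma g_one (n : ℕ) (κ : ℕ∞) :
    shiftFun (TreeE ⊤ κ) (lamF n κ) (eFun v0) = gfun n κ 1 := by
  funext v
  rcases v with a | q
  · by_cases h : ((a.1 + 1 : ℕ) : ℕ∞) ≤ κ
    · rw [sh_inl _ _ _ h, eFun_ne (by simp [v0]), mul_zero]; rfl
    · rw [sh_inl_root _ _ _ h]; rfl
  · rcases Nat.lt_or_ge q.1.2 2 with h1 | h2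
    · have h1 : q.1.2 = 1 := by have := q.2.2.2; omega
      rw [sh_inr_one _ _ _ h1, eFun_self, mul_one]
      simp only [lamF, gfun]
      rw [if_pos h1, if_pos h1, pow_zero, mul_one]
    · rw [sh_inr_ge2 _ _ _ h2, eFun_ne (by simp [v0]), mul_zero]
      simp only [gfun]
      rw [if_neg (by omega)]

lemma g_succ (n : ℕ) (κ : ℕ∞) {k : ℕ} (hk : 1 ≤ k) :
    shiftFun (TreeE ⊤ κ) (lamF n κ) (gfun n κ k) = gfun n κ (k + 1) := by
  funext v
  rcases v with a | q
  · by_cases h : ((a.1 + 1 : ℕ) : ℕ∞) ≤ κ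
    · rw [sh_inl _ _ _ h]
      show _ * (0 : ℂ) = _
      rw [mul_zero]; rfl
    · rw [sh_inl_root _ _ _ h]; rfl
  · rcases Nat.lt_or_ge q.1.2 2 with h1 | h2
    · have h1 : q.1.2 = 1 := by have := q.2.2.2; omega
      rw [sh_inr_one _ _ _ h1]
      show _ * (0 : ℂ) = _
      rw [mul_zero]
      simp only [gfun]
      rw [if_neg (by omega)]
    · rw [sh_inr_ge2 _ _ _ h2]
      simp only [gfun, lamF]
      rw [if_neg (by omega : ¬ q.1.2 = 1)]
      by_cases he : q.1.2 = k + 1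
      · rw [if_pos (show q.1.2 - 1 = k by omega), if_pos he]
        have key : NNReal.sqrt (q.1.1 : ℝ≥0) *
            (aw n q.1.1 * NNReal.sqrt (q.1.1 : ℝ≥0) ^ (k - 1))
            = aw n q.1.1 * NNReal.sqrt (q.1.1 : ℝ≥0) ^ (k + 1 - 1) := by
          rw [← mul_assoc, mul_comm (NNReal.sqrt _) (aw n q.1.1), mul_assoc]
          congr 1
          rw [← pow_succ']
          congr 1
          omega
        rw [← key]
        push_cast
        ring
      · rw [if_neg (show ¬ q.1.2 - 1 = k by omega), if_neg he, mul_zero]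

lemma g_iter (n : ℕ) (κ : ℕ∞) (m : ℕ) {k : ℕ} (hk : 1 ≤ k) :
    (shiftFun (TreeE ⊤ κ) (lamF n κ))^[m] (gfun n κ k) = gfun n κ (k + m) := by
  induction m with
  | zero => rfl
  | succ m ih =>
      rw [Function.iterate_succ_apply', ih, g_succ n κ (by omega), ← add_assoc]

lemma iter_e0 (n : ℕ) (κ : ℕ∞) {k : ℕ} (hk : 1 ≤ k) :
    (shiftFun (TreeE ⊤ κ) (lamF n κ))^[k] (eFun v0) = gfun n κ k := by
  obtain ⟨m, rfl⟩ : ∃ m, k = m + 1 := ⟨k - 1, by omega⟩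
  rw [Function.iterate_succ_apply, g_one, g_iter n κ m le_rfl, Nat.add_comm]

/-! ### Memℓp of the gfun -/

lemma awsq (n : ℕ) {i : ℕ} (hi : 1 ≤ i) {k : ℕ} (hk1 : 1 ≤ k) (hk : k ≤ n + 1) :
    ((aw n i * NNReal.sqrt (i : ℝ≥0) ^ (k - 1)) ^ 2 : ℝ≥0)
      = (tau n 0)⁻¹ * ((i : ℝ≥0) ^ (n + 2 - k))⁻¹ := by
  have hne : ((i : ℝ≥0)) ≠ 0 := by exact_mod_cast Nat.one_le_iff_ne_zero.1 hi
  rw [mul_pow, aw_sq, ← pow_mul, mul_comm (k - 1) 2, pow_mul, NNReal.sq_sqrt,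
    mul_assoc]
  congr 1
  have h1 : ((i : ℝ≥0) ^ (n + 1)) = (i : ℝ≥0) ^ (n + 2 - k) * (i : ℝ≥0) ^ (k - 1) := by
    rw [← pow_add]
    congr 1
    omega
  rw [h1, mul_inv, mul_assoc, inv_mul_cancel₀ (pow_ne_zero _ hne), mul_one]

lemma memℓp_gfun (n : ℕ) (κ : ℕ∞) {k : ℕ} (hk1 : 1 ≤ k) (hk : k ≤ n) :
    Memℓp (gfun n κ k) 2 := by
  refine memℓp_gen ?_
  have h2 : ((2 : ℝ≥0∞)).toReal = (2 : ℝ) := by norm_num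
  simp only [h2, Real.rpow_two]
  refine (Function.Injective.summable_iff
    (f := fun v : TreeV ⊤ κ => ‖gfun n κ k v‖ ^ 2)
    (g := Sum.inr) Sum.inr_injective ?_).1 ?_
  · rintro (a | q) hx
    · show ‖gfun n κ k (Sum.inl a)‖ ^ 2 = 0
      show ‖(0 : ℂ)‖ ^ 2 = 0
      simp
    · exact absurd ⟨q, rfl⟩ hx
  · have h1 : Summable (fun i : ℕ => ((tau n 0 : ℝ))⁻¹ * (((i : ℝ)) ^ (n + 2 - k))⁻¹) :=
      (Real.summable_nat_pow_inv.2 (by omega)).mul_left _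
    have hg : Summable (fun j : ℕ => if j = k then (1 : ℝ) else 0) :=
      summable_of_ne_finset_zero (s := {k}) (fun b hb => by
        rw [if_neg (by simpa using hb)])
    have hF := h1.mul_of_nonneg hg (fun i => by positivity)
      (fun j => by dsimp only; split <;> norm_num)
    refine ((hF.comp_injective Subtype.val_injective).congr fun p => ?_)
    show _ * _ = ‖gfun n κ k (Sum.inr p)‖ ^ 2
    simp only [gfun]
    by_cases he : p.1.2 = k
    · rw [if_pos he, if_pos he, mul_one]
      have hval := awsq n p.2.1 hk1 (show k ≤ n + 1 by omega)
      rw [Complex.norm_real, Real.norm_of_nonneg (NNReal.coe_nonneg _),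
        ← NNReal.coe_pow, hval]
      push_cast
      ring
    · rw [if_neg he, if_neg he, mul_zero, norm_zero]
      norm_num

/-! ### Trunk vectors -/

lemma sh_eFun_trunk (n : ℕ) {κ : ℕ∞} {l : ℕ} (hl1 : ((l + 1 : ℕ) : ℕ∞) ≤ κ)
    (hl : ((l : ℕ) : ℕ∞) ≤ κ) :
    shiftFun (TreeE ⊤ κ) (lamF n κ) (eFun (Sum.inl ⟨l + 1, hl1⟩))
      = ((tw n l : ℝ) : ℂ) • eFun (Sum.inl ⟨l, hl⟩) := by
  funext v
  rcases v with a | q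
  · by_cases h : ((a.1 + 1 : ℕ) : ℕ∞) ≤ κ
    · rw [sh_inl _ _ _ h, Pi.smul_apply, smul_eq_mul]
      by_cases ha : a.1 = l
      · have hv : (Sum.inl ⟨a.1 + 1, h⟩ : TreeV ⊤ κ) = Sum.inl ⟨l + 1, hl1⟩ :=
          congrArg Sum.inl (Subtype.ext (show a.1 + 1 = l + 1 by omega))
        have hv2 : (Sum.inl a : TreeV ⊤ κ) = Sum.inl ⟨l, hl⟩ :=
          congrArg Sum.inl (Subtype.ext ha)
        rw [hv, hv2, eFun_self, eFun_self, mul_one, mul_one]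
        rfl
      · have hne1 : (Sum.inl ⟨a.1 + 1, h⟩ : TreeV ⊤ κ) ≠ Sum.inl ⟨l + 1, hl1⟩ := by
          intro hEq
          have h' : a.1 + 1 = l + 1 := congrArg Subtype.val (Sum.inl.inj hEq)
          omega
        have hne2 : (Sum.inl a : TreeV ⊤ κ) ≠ Sum.inl ⟨l, hl⟩ := by
          simp only [ne_eq, Sum.inl.injEq, Subtype.ext_iff]
          exact ha
        rw [eFun_ne hne1, eFun_ne hne2, mul_zero, mul_zero]
    · rw [sh_inl_root _ _ _ h, Pi.smul_apply, smul_eq_mul]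
      have hne2 : (Sum.inl a : TreeV ⊤ κ) ≠ Sum.inl ⟨l, hl⟩ := by
        simp only [ne_eq, Sum.inl.injEq, Subtype.ext_iff]
        intro ha
        refine h ?_
        rw [show a.1 = l from ha]
        exact hl1
      rw [eFun_ne hne2, mul_zero]
  · rcases Nat.lt_or_ge q.1.2 2 with h1 | h2
    · have h1 : q.1.2 = 1 := by have := q.2.2.2; omega
      rw [sh_inr_one _ _ _ h1, Pi.smul_apply, smul_eq_mul]
      have hne : (v0 : TreeV ⊤ κ) ≠ Sum.inl ⟨l + 1, hl1⟩ := by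
        intro hEq
        have h' : 0 = l + 1 := congrArg Subtype.val (Sum.inl.inj hEq)
        omega
      rw [eFun_ne hne, eFun_ne (by simp), mul_zero, mul_zero]
    · rw [sh_inr_ge2 _ _ _ h2, Pi.smul_apply, smul_eq_mul,
        eFun_ne (by simp), eFun_ne (by simp), mul_zero, mul_zero]

/-! ### Support of iterates on branch vectors -/

lemma iter_branch_support (n : ℕ) (κ : ℕ∞) (p : BranchV ⊤) :
    ∀ (k : ℕ) (v : TreeV ⊤ κ),
      (shiftFun (TreeE ⊤ κ) (lamF n κ))^[k] (eFun (Sum.inr p)) v ≠ 0 →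
      v = Sum.inr ⟨(p.1.1, p.1.2 + k), ⟨p.2.1, le_top, by omega⟩⟩ := by
  intro k
  induction k with
  | zero =>
      intro v hv
      have hvp : v = Sum.inr p := by
        by_contra hne
        exact hv (eFun_ne hne)
      rw [hvp]
      exact congrArg Sum.inr (Subtype.ext (Prod.ext rfl rfl))
  | succ k ih =>
      intro v hv
      rw [Function.iterate_succ_apply'] at hv
      rcases v with a | q
      · exfalso
        by_cases h : ((a.1 + 1 : ℕ) : ℕ∞) ≤ κ
        · rw [sh_inl _ _ _ h] at hv
          have hne := right_ne_zero_of_mul hv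
          have := ih _ hne
          simp at this
        · rw [sh_inl_root _ _ _ h] at hv
          exact hv rfl
      · rcases Nat.lt_or_ge q.1.2 2 with h1 | h2
        · exfalso
          have h1 : q.1.2 = 1 := by have := q.2.2.2; omega
          rw [sh_inr_one _ _ _ h1] at hv
          have hne := right_ne_zero_of_mul hv
          have := ih _ hne
          simp [v0] at this
        · rw [sh_inr_ge2 _ _ _ h2] at hv
          have hne := right_ne_zero_of_mul hv
          have heq := ih _ hne
          simp only [Sum.inr.injEq, Subtype.mk.injEq, Prod.mk.injEq] at heq
          refine congrArg Sum.inr (Subtype.ext (Prod.ext ?_ ?_))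
          · exact heq.1
          · show q.1.2 = p.1.2 + (k + 1)
            have := heq.2
            omega

lemma memℓp_branch (n : ℕ) (κ : ℕ∞) (p : BranchV ⊤) (k : ℕ) :
    Memℓp ((shiftFun (TreeE ⊤ κ) (lamF n κ))^[k] (eFun (Sum.inr p))) 2 := by
  refine memℓp_of_support_singleton _
    (Sum.inr ⟨(p.1.1, p.1.2 + k), ⟨p.2.1, le_top, by omega⟩⟩) fun v hv => ?_
  by_contra hz
  exact hv (iter_branch_support n κ p k v hz)

/-! ### All basis vectors are in the domain -/

lemma memℓp_eFun {κ : ℕ∞} (u : TreeV ⊤ κ) : Memℓp (eFun u) 2 :=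
  memℓp_of_support_singleton _ u fun _ hv => eFun_ne hv

lemma memℓp_trunk (n : ℕ) {κ : ℕ∞} :
    ∀ (l : ℕ) (hl : ((l : ℕ) : ℕ∞) ≤ κ) (k : ℕ), k ≤ n →
      Memℓp ((shiftFun (TreeE ⊤ κ) (lamF n κ))^[k] (eFun (Sum.inl ⟨l, hl⟩))) 2 := by
  intro l
  induction l with
  | zero =>
      intro hl k hk
      rcases Nat.eq_zero_or_pos k with rfl | hk1
      · exact memℓp_eFun _
      · have : (Sum.inl ⟨0, hl⟩ : TreeV ⊤ κ) = v0 := rfl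
        rw [this, iter_e0 n κ hk1]
        exact memℓp_gfun n κ hk1 hk
  | succ l ih =>
      intro hl k hk
      have hl' : ((l : ℕ) : ℕ∞) ≤ κ := le_trans (by exact_mod_cast Nat.le_succ l) hl
      rcases Nat.eq_zero_or_pos k with rfl | hk1
      · exact memℓp_eFun _
      · obtain ⟨m, rfl⟩ : ∃ m, k = m + 1 := ⟨k - 1, by omega⟩
        rw [Function.iterate_succ_apply, sh_eFun_trunk n hl hl', sh_iter_smul]
        exact (ih hl' m (by omega)).const_smul _

lemma memℓp_all (n : ℕ) {κ : ℕ∞} (u : TreeV ⊤ κ) (k : ℕ) (hk : k ≤ n) :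
    Memℓp ((shiftFun (TreeE ⊤ κ) (lamF n κ))^[k] (eFun u)) 2 := by
  rcases u with a | p
  · have : a = ⟨a.1, a.2⟩ := rfl
    rw [this]
    exact memℓp_trunk n a.1 a.2 k hk
  · exact memℓp_branch n κ p k

/-! ### Density -/

lemma single_coe {V : Type*} [DecidableEq V] (u : V) (c : ℂ) :
    ⇑(lp.single (E := fun _ : V => ℂ) 2 u c) = c • eFun u := by
  funext v
  rcases eq_or_ne v u with rfl | h
  · rw [lp.single_apply_self, Pi.smul_apply, eFun_self, smul_eq_mul, mul_one]
  · rw [lp.single_apply_ne _ _ _ h, Pi.smul_apply, eFun_ne h, smul_zero]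

lemma dense_part (n : ℕ) (κ : ℕ∞) : DenselyDefinedPow (TreeE ⊤ κ) (lamF n κ) n := by
  classical
  haveI : Fact (1 ≤ (2 : ℝ≥0∞)) := ⟨one_le_two⟩
  intro f
  have hsum := lp.hasSum_single (E := fun _ : TreeV ⊤ κ => ℂ) (p := 2) (by norm_num) f
  refine mem_closure_of_tendsto hsum (Filter.Eventually.of_forall fun s => ?_)
  show (⇑(∑ u ∈ s, lp.single 2 u (f u)) : TreeV ⊤ κ → ℂ) ∈
    domPow (TreeE ⊤ κ) (lamF n κ) n
  rw [lp.coeFn_sum]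
  intro k hk
  induction s using Finset.induction_on with
  | empty =>
      rw [Finset.sum_empty, sh_iter_zero]
      exact zero_memℓp
  | insert _ _ hu ih =>
      rw [Finset.sum_insert hu, sh_iter_add]
      refine Memℓp.add ?_ ih
      rw [single_coe, sh_iter_smul]
      exact (memℓp_all n _ k hk).const_smul _

/-! ### Non-density -/

lemma value_formula (n : ℕ) (κ : ℕ∞) (f : TreeV ⊤ κ → ℂ) {i : ℕ} (hi : 1 ≤ i) :
    ∀ {k : ℕ} (hk : 1 ≤ k),
      (shiftFun (TreeE ⊤ κ) (lamF n κ))^[k] f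
          (Sum.inr ⟨(i, k), ⟨hi, le_top, hk⟩⟩) =
        (((aw n i * NNReal.sqrt (i : ℝ≥0) ^ (k - 1) : ℝ≥0) : ℝ) : ℂ) * f v0 := by
  intro k
  induction k with
  | zero => intro hk; exact absurd hk (by omega)
  | succ k ih =>
      intro _
      rcases Nat.eq_zero_or_pos k with rfl | hk
      · rw [Function.iterate_one, sh_inr_one _ _ _ rfl]
        simp only [lamF]
        rw [if_pos trivial, pow_zero, mul_one]
      · rw [Function.iterate_succ_apply',
          sh_inr_ge2 _ _ _ (show 2 ≤ ((i, k + 1) : ℕ × ℕ).2 by omega)]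
        show lamF n κ (Sum.inr ⟨(i, k + 1), ⟨hi, le_top, by omega⟩⟩) *
          (shiftFun (TreeE ⊤ κ) (lamF n κ))^[k] f
            (Sum.inr ⟨(i, k), ⟨hi, le_top, by omega⟩⟩) = _
        rw [ih hk]
        simp only [lamF]
        rw [if_neg (by omega : ¬ ((i, k + 1) : ℕ × ℕ).2 = 1)]
        have key : NNReal.sqrt (i : ℝ≥0) *
            (aw n i * NNReal.sqrt (i : ℝ≥0) ^ (k - 1))
            = aw n i * NNReal.sqrt (i : ℝ≥0) ^ (k + 1 - 1) := by
          rw [← mul_assoc, mul_comm (NNReal.sqrt _) (aw n i), mul_assoc]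
          congr 1
          rw [← pow_succ']
          congr 1
          omega
        rw [← mul_assoc, ← key]
        push_cast
        ring

lemma not_dense (n : ℕ) (κ : ℕ∞) :
    ¬ DenselyDefinedPow (TreeE ⊤ κ) (lamF n κ) (n + 1) := by
  intro hd
  classical
  have hlip : LipschitzWith 1
      (fun g : lp (fun _ : TreeV ⊤ κ => ℂ) 2 => (⇑g) (v0 : TreeV ⊤ κ)) := by
    refine LipschitzWith.of_dist_le_mul fun g1 g2 => ?_
    rw [dist_eq_norm, dist_eq_norm, NNReal.coe_one, one_mul]
    have h := lp.norm_apply_le_norm (E := fun _ : TreeV ⊤ κ => ℂ) (p := 2)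
      (by norm_num) (g1 - g2) (v0 : TreeV ⊤ κ)
    simpa [lp.coeFn_sub] using h
  have hclosed : IsClosed {g : lp (fun _ : TreeV ⊤ κ => ℂ) 2 |
      (⇑g) (v0 : TreeV ⊤ κ) = 0} :=
    isClosed_eq hlip.continuous continuous_const
  have hsub : {g : lp (fun _ : TreeV ⊤ κ => ℂ) 2 |
      (⇑g : TreeV ⊤ κ → ℂ) ∈ domPow (TreeE ⊤ κ) (lamF n κ) (n + 1)} ⊆
      {g : lp (fun _ : TreeV ⊤ κ => ℂ) 2 | (⇑g) (v0 : TreeV ⊤ κ) = 0} := by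
    intro g hg
    have hmem := hg (n + 1) le_rfl
    by_contra hc
    have hsumm := (memℓp_gen_iff (p := 2) (by norm_num)).1 hmem
    have h2 : ((2 : ℝ≥0∞)).toReal = (2 : ℝ) := by norm_num
    simp only [h2, Real.rpow_two] at hsumm
    have hinj : Function.Injective (fun i : {i : ℕ // 1 ≤ i} =>
        (Sum.inr ⟨((i : ℕ), n + 1), ⟨i.2, le_top, by omega⟩⟩ : TreeV ⊤ κ)) := by
      intro a b hab
      simp only [Sum.inr.injEq, Subtype.mk.injEq, Prod.mk.injEq] at hab
      exact Subtype.ext hab.1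
    have hcomp := hsumm.comp_injective hinj
    have hval : ∀ i : {i : ℕ // 1 ≤ i},
        ‖(shiftFun (TreeE ⊤ κ) (lamF n κ))^[n + 1] (⇑g)
            (Sum.inr ⟨((i : ℕ), n + 1), ⟨i.2, le_top, by omega⟩⟩)‖ ^ 2
          = (((tau n 0 : ℝ))⁻¹ * ‖(⇑g) (v0 : TreeV ⊤ κ)‖ ^ 2) * (((i : ℕ) : ℝ))⁻¹ := by
      intro i
      rw [value_formula n κ (⇑g) i.2 (by omega)]
      rw [norm_mul, Complex.norm_real, Real.norm_of_nonneg (NNReal.coe_nonneg _),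
        mul_pow, ← NNReal.coe_pow, awsq n i.2 (by omega : 1 ≤ n + 1) (by omega)]
      have h3 : n + 2 - (n + 1) = 1 := by omega
      rw [h3, pow_one]
      push_cast
      ring
    have hcomp2 := hcomp.congr hval
    have hcpos : (0 : ℝ) < ((tau n 0 : ℝ))⁻¹ * ‖(⇑g) (v0 : TreeV ⊤ κ)‖ ^ 2 := by
      have h1 : (0 : ℝ) < (tau n 0 : ℝ) := by exact_mod_cast tau_pos n 0
      have h2 : (0 : ℝ) < ‖(⇑g) (v0 : TreeV ⊤ κ)‖ := norm_pos_iff.2 hc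
      positivity
    have hsum3 : Summable (fun i : {i : ℕ // 1 ≤ i} => (((i : ℕ) : ℝ))⁻¹) :=
      (summable_mul_left_iff hcpos.ne').1 hcomp2
    have hsum4 : Summable (fun i : ℕ => ((i : ℝ))⁻¹) := by
      have h5 := (summable_subtype_iff_indicator
        (f := fun i : ℕ => ((i : ℝ))⁻¹) (s := {i : ℕ | 1 ≤ i})).1 hsum3
      have h6 : Set.indicator {i : ℕ | 1 ≤ i} (fun i : ℕ => ((i : ℝ))⁻¹)
          = fun i : ℕ => ((i : ℝ))⁻¹ := by
        funext i
        rcases Nat.eq_zero_or_pos i with rfl | hi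
        · rw [Set.indicator_of_notMem (by simp)]
          simp
        · rw [Set.indicator_of_mem (show i ∈ {i : ℕ | 1 ≤ i} from hi)]
      rwa [h6] at h5
    exact Real.not_summable_natCast_inv hsum4
  have hone := (hd.closure_eq ▸ closure_minimal hsub hclosed)
    (Set.mem_univ (lp.single 2 (v0 : TreeV ⊤ κ) (1 : ℂ)))
  have hone2 : (1 : ℂ) = 0 := by
    have := hone
    rw [Set.mem_setOf_eq, lp.single_apply_self] at this
    exact this
  exact one_ne_zero hone2

end JJS11

/-- The example: for every `n ≥ 1` and every `κ ∈ ℤ₊ ∪ {∞}` there exist nonzero weights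
on `𝒯_{∞,κ}` and numbers `q_i ∈ (0,∞)` such that the Dirac measures `μ_i = δ_{q_i}`
satisfy the moment condition, the appropriate consistency condition among (i), (ii),
(iii) holds, and the weighted shift `S_λ` on `𝒯_{∞,κ}` has `S_λ^n` densely defined while
`S_λ^{n+1}` is not. -/
theorem stmt_11 (n : ℕ) (hn : 1 ≤ n) (κ : ℕ∞) :
    ∃ (lam : TreeV ⊤ κ → ℂ) (q : ℕ → ℝ≥0),
      (∀ v : TreeV ⊤ κ, HasParent (TreeE ⊤ κ) v → lam v ≠ 0) ∧
      (∀ i : ℕ, 1 ≤ i → 0 < q i) ∧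
      MomentCond ⊤ κ lam (fun i => Measure.dirac (q i)) ∧
      ((κ = 0 ∧ diracSum κ lam q 0 ≤ 1) ∨
        (∃ k : ℕ, 0 < k ∧ κ = (k : ℕ∞) ∧ diracSum κ lam q 0 = 1 ∧
          (∀ l : ℕ, 1 ≤ l → l ≤ k - 1 →
            (‖∏ j ∈ Finset.range l, lamT lam j‖₊ : ℝ≥0∞) ^ 2 * diracSum κ lam q l = 1) ∧
          (‖∏ j ∈ Finset.range k, lamT lam j‖₊ : ℝ≥0∞) ^ 2 * diracSum κ lam q k ≤ 1) ∨
        (κ = ⊤ ∧ diracSum κ lam q 0 = 1 ∧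
          ∀ l : ℕ, 1 ≤ l →
            (‖∏ j ∈ Finset.range l, lamT lam j‖₊ : ℝ≥0∞) ^ 2 * diracSum κ lam q l = 1)) ∧
      DenselyDefinedPow (TreeE ⊤ κ) lam n ∧
      ¬ DenselyDefinedPow (TreeE ⊤ κ) lam (n + 1) := by
  classical
  refine ⟨JJS11.lamF n κ, fun i => (i : ℝ≥0), ?_, ?_, ?_, ?_, ?_, ?_⟩
  · intro v _
    rcases v with a | p
    · show ((JJS11.tw n a.1 : ℝ) : ℂ) ≠ 0
      exact Complex.ofReal_ne_zero.2
        (NNReal.coe_ne_zero.2 (JJS11.tw_ne_zero n a.1))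
    · simp only [JJS11.lamF]
      split
      · exact Complex.ofReal_ne_zero.2
          (NNReal.coe_ne_zero.2 (JJS11.aw_ne_zero n p.2.1))
      · refine Complex.ofReal_ne_zero.2 (NNReal.coe_ne_zero.2 ?_)
        rw [ne_eq, NNReal.sqrt_eq_zero]
        exact_mod_cast Nat.one_le_iff_ne_zero.1 p.2.1
  · intro i hi
    have h0 : 0 < i := hi
    show (0 : ℝ≥0) < (i : ℝ≥0)
    exact_mod_cast h0
  · intro m hm i hi _
    exact JJS11.moment n κ hm hi
  · induction κ using ENat.recTopCoe with
    | top =>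
        exact Or.inr (Or.inr ⟨rfl, JJS11.diracSum_zero n ⊤,
          fun l _ => JJS11.cond_eq n (fun j _ => le_top)⟩)
    | coe k =>
        rcases Nat.eq_zero_or_pos k with rfl | hk
        · exact Or.inl ⟨by norm_cast, le_of_eq (JJS11.diracSum_zero n _)⟩
        · refine Or.inr (Or.inl ⟨k, hk, rfl, JJS11.diracSum_zero n _,
            fun l _ _ => JJS11.cond_eq n (fun j hj => ?_),
            le_of_eq (JJS11.cond_eq n (fun j hj => ?_))⟩)
          · exact_mod_cast Nat.cast_le.2 (by omega : j ≤ k)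
          · exact_mod_cast Nat.cast_le.2 (by omega : j ≤ k)
  · exact JJS11.dense_part n κ
  · exact JJS11.not_dense n κ
end

section
/- Let n be a positive integer and let q : ℕ₊ → (0, ∞) (ℕ₊ the positive integers) be a sequence with sup{q_i : i ∈ ℕ₊} = ∞. Then there exists a sequence α : ℕ₊ → (0, ∞) such that Σ_{i=1}^∞ α_i q_i^l < ∞ for every integer l with l ≤ n, and Σ_{i=1}^∞ α_i q_i^{n+1} = ∞. -/
open ENNReal

/-- If `q : ℕ₊ → (0,∞)` satisfies `sup_i q_i = ∞`, then for every `n ≥ 1` there is a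
sequence `α : ℕ₊ → (0,∞)` such that `Σ_i α_i q_i^l < ∞` for every integer `l ≤ n`, while
`Σ_i α_i q_i^{n+1} = ∞` (sums of nonnegative terms, with values in `[0,∞]`). -/
theorem stmt_13 (n : ℕ) (hn : 1 ≤ n) (q : ℕ+ → ℝ) (hq : ∀ i : ℕ+, 0 < q i)
    (hsup : ¬ BddAbove (Set.range q)) :
    ∃ α : ℕ+ → ℝ, (∀ i : ℕ+, 0 < α i) ∧
      (∀ l : ℤ, l ≤ (n : ℤ) → (∑' i : ℕ+, ENNReal.ofReal (α i * q i ^ l)) < ⊤) ∧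
      (∑' i : ℕ+, ENNReal.ofReal (α i * q i ^ (n + 1 : ℤ))) = ⊤ := by
  classical
  -- Step 1: unboundedness with index going to infinity
  have h1 : ∀ (M : ℝ) (N : ℕ+), ∃ i : ℕ+, N < i ∧ M < q i := by
    intro M N
    rw [not_bddAbove_iff] at hsup
    obtain ⟨y, ⟨i, rfl⟩, hy⟩ := hsup (max M ((Finset.Iic N).sup' ⟨1, Finset.mem_Iic.mpr N.one_le⟩ q))
    refine ⟨i, ?_, lt_of_le_of_lt (le_max_left _ _) hy⟩
    by_contra h
    push_neg at h
    exact absurd (Finset.le_sup' q (Finset.mem_Iic.mpr h))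
      (not_le.mpr (lt_of_le_of_lt (le_max_right _ _) hy))
  -- Step 2: a strictly monotone sequence of indices with large q
  set F : ℕ → ℕ+ := fun k => Nat.rec (h1 1 1).choose (fun k prev => (h1 (2^(k+1)) prev).choose) k with hF
  have hFq : ∀ k : ℕ, (2:ℝ)^k < q (F k) := by
    intro k
    cases k with
    | zero => show (2:ℝ)^0 < q (h1 1 1).choose; simpa using (h1 1 1).choose_spec.2
    | succ k => exact (h1 (2^(k+1)) (F k)).choose_spec.2
  have hFlt : ∀ k : ℕ, F k < F (k+1) := fun k => (h1 (2^(k+1)) (F k)).choose_spec.1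
  have hFinj : Function.Injective F := (strictMono_nat_of_lt_succ hFlt).injective
  have hFone : ∀ k : ℕ, 1 ≤ q (F k) := fun k => le_of_lt (lt_of_le_of_lt (one_le_pow₀ (by norm_num)) (hFq k))
  -- The sequence α
  set base : ℕ+ → ℝ := fun i => (1/2)^(i:ℕ) * min (q i) 1 ^ (i:ℕ) * min (q i)⁻¹ 1 ^ n with hbase
  set extra : ℕ+ → ℝ := fun i => Set.indicator (Set.range F) (fun j => q j ^ (-(n+1) : ℤ)) i with hextra
  have hbasepos : ∀ i, 0 < base i := by
    intro i
    have h0 := hq i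
    have h1 : (0:ℝ) < min (q i) 1 := lt_min h0 one_pos
    have h2 : (0:ℝ) < min (q i)⁻¹ 1 := lt_min (by positivity) one_pos
    have h3 : (0:ℝ) < (1/2:ℝ)^(i:ℕ) := by positivity
    exact mul_pos (mul_pos h3 (pow_pos h1 _)) (pow_pos h2 _)
  have hextranonneg : ∀ i, 0 ≤ extra i := by
    intro i
    apply Set.indicator_nonneg
    intro j _
    exact (zpow_pos (hq j) _).le
  -- geometric series facts
  have hgeo : (∑' k : ℕ, ENNReal.ofReal ((1/2)^k)) < ⊤ := by
    rw [← ENNReal.ofReal_tsum_of_nonneg (fun k => by positivity)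
      (summable_geometric_of_lt_one (by norm_num) (by norm_num))]
    exact ENNReal.ofReal_lt_top
  have hgeoP : (∑' i : ℕ+, ENNReal.ofReal ((1/2)^(i:ℕ))) < ⊤ := by
    refine lt_of_le_of_lt ?_ hgeo
    exact Summable.tsum_le_tsum_of_inj (fun i : ℕ+ => (i : ℕ)) (fun a b h => PNat.coe_injective h)
      (fun _ _ => zero_le) (fun _ => le_rfl) ENNReal.summable ENNReal.summable
  -- extra-part tsum rewrite
  have hextratsum : ∀ g : ℕ+ → ℝ,
      (∑' i : ℕ+, ENNReal.ofReal (extra i * g i)) =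
        ∑' k : ℕ, ENNReal.ofReal (q (F k) ^ (-(n+1) : ℤ) * g (F k)) := by
    intro g
    have : ∀ i : ℕ+, ENNReal.ofReal (extra i * g i)
        = Set.indicator (Set.range F) (fun j => ENNReal.ofReal (q j ^ (-(n+1) : ℤ) * g j)) i := by
      intro i
      by_cases hi : i ∈ Set.range F
      · simp [hextra, Set.indicator_of_mem hi]
      · simp [hextra, Set.indicator_of_notMem hi]
    rw [tsum_congr this, ← tsum_subtype]
    exact ((Equiv.ofInjective F hFinj).tsum_eq
      (fun y : Set.range F => ENNReal.ofReal (q y ^ (-(n+1) : ℤ) * g y))).symm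
  refine ⟨fun i => base i + extra i, fun i => lt_of_lt_of_le (hbasepos i) (le_add_of_nonneg_right (hextranonneg i)), ?_, ?_⟩
  · -- finiteness for l ≤ n
    intro l hl
    have hsplit : ∀ i : ℕ+, ENNReal.ofReal ((base i + extra i) * q i ^ l)
        = ENNReal.ofReal (base i * q i ^ l) + ENNReal.ofReal (extra i * q i ^ l) := by
      intro i
      rw [add_mul, ENNReal.ofReal_add]
      · exact mul_nonneg (hbasepos i).le (zpow_nonneg (hq i).le _)
      · exact mul_nonneg (hextranonneg i) (zpow_nonneg (hq i).le _)
    rw [tsum_congr hsplit, ENNReal.tsum_add]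
    have hA : (∑' i : ℕ+, ENNReal.ofReal (base i * q i ^ l)) < ⊤ := by
      -- key pointwise bound off a finite set
      have hkey : ∀ i : ℕ+, -l ≤ (i:ℤ) → base i * q i ^ l ≤ (1/2)^(i:ℕ) := by
        intro i hi
        have hq0 := hq i
        rcases le_or_gt 1 (q i) with h1q | h1q
        · have hmin1 : min (q i) 1 = 1 := min_eq_right h1q
          have hmin2 : min (q i)⁻¹ 1 = (q i)⁻¹ := min_eq_left (inv_le_one_of_one_le₀ h1q)
          have : base i * q i ^ l = (1/2)^(i:ℕ) * q i ^ (l - n) := by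
            rw [hbase]
            simp only [hmin1, hmin2, one_pow, mul_one]
            rw [mul_assoc]
            congr 1
            rw [inv_pow, ← zpow_natCast (q i) n, ← zpow_neg, ← zpow_add₀ hq0.ne']
            congr 1
            ring
          rw [this]
          nlinarith [zpow_le_one_of_nonpos₀ h1q (by omega : l - (n:ℤ) ≤ 0),
            zpow_nonneg hq0.le (l - (n:ℤ)), pow_pos (by norm_num : (0:ℝ) < 1/2) (i:ℕ)]
        · have hmin1 : min (q i) 1 = q i := min_eq_left h1q.le
          have hmin2 : min (q i)⁻¹ 1 = 1 := min_eq_right ((one_le_inv₀ hq0).mpr h1q.le)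
          have heq : base i * q i ^ l = (1/2)^(i:ℕ) * q i ^ ((i:ℤ) + l) := by
            rw [hbase]
            simp only [hmin1, hmin2, one_pow, mul_one]
            rw [← zpow_natCast (q i) (i:ℕ), mul_assoc, ← zpow_add₀ hq0.ne']
          rw [heq]
          nlinarith [zpow_le_one₀ hq0 h1q.le (by linarith : (0:ℤ) ≤ (i:ℤ) + l),
            zpow_nonneg hq0.le ((i:ℤ) + l), pow_pos (by norm_num : (0:ℝ) < 1/2) (i:ℕ)]
      set B : Set ℕ+ := {i : ℕ+ | (i:ℤ) < -l} with hB
      have hBfin : B.Finite := by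
        apply Set.Finite.subset (Set.finite_Iic (⟨l.natAbs + 1, Nat.succ_pos _⟩ : ℕ+))
        intro i hi
        have hi' : ((i:ℕ):ℤ) < -l := hi
        have h5 : -l ≤ (l.natAbs : ℤ) := by
          have := Int.le_natAbs (a := -l)
          rwa [Int.natAbs_neg] at this
        have h6 : (i:ℤ) ≤ (l.natAbs : ℤ) + 1 := by linarith
        have : (i:ℕ) ≤ l.natAbs + 1 := by exact_mod_cast h6
        exact this
      have hbound : ∀ i : ℕ+, ENNReal.ofReal (base i * q i ^ l)
          ≤ ENNReal.ofReal ((1/2)^(i:ℕ)) +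
            Set.indicator B (fun j => ENNReal.ofReal (base j * q j ^ l)) i := by
        intro i
        by_cases hi : i ∈ B
        · rw [Set.indicator_of_mem hi]
          exact le_add_self
        · rw [Set.indicator_of_notMem hi, add_zero]
          apply ENNReal.ofReal_le_ofReal
          apply hkey
          simp only [hB, Set.mem_setOf_eq, not_lt] at hi
          exact hi
      refine lt_of_le_of_lt (Summable.tsum_le_tsum hbound ENNReal.summable ENNReal.summable) ?_
      rw [ENNReal.tsum_add]
      apply ENNReal.add_lt_top.mpr
      constructor
      · exact hgeoP
      · rw [tsum_eq_sum (s := hBfin.toFinset)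
          (fun i hi => Set.indicator_of_notMem (by simpa using hi) _)]
        apply ENNReal.sum_lt_top.mpr
        intro i _
        by_cases hi : i ∈ B
        · rw [Set.indicator_of_mem hi]; exact ENNReal.ofReal_lt_top
        · rw [Set.indicator_of_notMem hi]; exact ENNReal.zero_lt_top
    have hB : (∑' i : ℕ+, ENNReal.ofReal (extra i * q i ^ l)) < ⊤ := by
      rw [hextratsum (fun i => q i ^ l)]
      have hb : ∀ k : ℕ, ENNReal.ofReal (q (F k) ^ (-(n+1) : ℤ) * q (F k) ^ l)
          ≤ ENNReal.ofReal ((1/2)^k) := by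
        intro k
        apply ENNReal.ofReal_le_ofReal
        have hq0 : (0:ℝ) < q (F k) := hq _
        rw [← zpow_add₀ hq0.ne']
        have h2 : q (F k) ^ (-(n+1) + l : ℤ) ≤ q (F k) ^ (-1 : ℤ) :=
          zpow_le_zpow_right₀ (hFone k) (by omega)
        have h3 : q (F k) ^ (-1 : ℤ) = (q (F k))⁻¹ := by simp
        have h4 : (q (F k))⁻¹ ≤ ((2:ℝ)^k)⁻¹ := by
          apply inv_anti₀ (by positivity) (hFq k).le
        calc q (F k) ^ (-(n+1) + l : ℤ) ≤ (q (F k))⁻¹ := by rw [← h3]; exact h2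
          _ ≤ ((2:ℝ)^k)⁻¹ := h4
          _ = (1/2)^k := by rw [one_div, inv_pow]
      exact lt_of_le_of_lt (Summable.tsum_le_tsum hb ENNReal.summable ENNReal.summable) hgeo
    exact ENNReal.add_lt_top.mpr ⟨hA, hB⟩
  · -- divergence at n+1
    apply top_le_iff.mp
    have hle : ∀ i : ℕ+, ENNReal.ofReal (extra i * q i ^ (n+1 : ℤ))
        ≤ ENNReal.ofReal ((base i + extra i) * q i ^ (n+1 : ℤ)) := by
      intro i
      apply ENNReal.ofReal_le_ofReal
      apply mul_le_mul_of_nonneg_right _ (zpow_nonneg (hq i).le _)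
      exact le_add_of_nonneg_left (hbasepos i).le
    refine le_trans ?_ (Summable.tsum_le_tsum hle ENNReal.summable ENNReal.summable)
    rw [hextratsum (fun i => q i ^ (n+1 : ℤ))]
    have : ∀ k : ℕ, ENNReal.ofReal (q (F k) ^ (-(n+1) : ℤ) * q (F k) ^ (n+1 : ℤ)) = 1 := by
      intro k
      rw [zpow_neg, inv_mul_cancel₀ (zpow_ne_zero _ (hq (F k)).ne'), ENNReal.ofReal_one]
    rw [tsum_congr this]
    exact (tsum_const_eq_top_of_ne_zero one_ne_zero).ge
end
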